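/- arXiv:2503.07842 — 2 statements merged into one kernel-verified Lean document; each statement's English description precedes it below -/
import Mathlib

section
/- Under the anisotropic conformal change F̄ = e^{φ}F of a conic pseudo-Finsler surface (M,F), the functions P and Q satisfy the identity φ_{;2}·P + P_{;2} + ε·φ_{;2}·Q_{;2} − (I·φ_{;2} + 1)·Q − F²·φ_{,2} = 0 on A. -/
/-!
Common framework: conic pseudo-Finsler surfaces on an open conic subset
`A ⊆ M × (ℝ² ∖ {0})`, with modified Berwald frame, scalar derivatives,
and anisotropic conformal change `F̄ = e^φ F`.
-/

noncomputable section

open Real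

/-- A point `(x, y)` of the (slit) tangent bundle of an open subset of `ℝ²`. -/
abbrev Pt : Type := (Fin 2 → ℝ) × (Fin 2 → ℝ)

/-- Partial derivative in the base (`x`) direction `i`. -/
def pdx (f : Pt → ℝ) (i : Fin 2) (p : Pt) : ℝ :=
  fderiv ℝ f p (Pi.single i 1, (0 : Fin 2 → ℝ))

/-- Partial derivative in the fibre (`y`) direction `i`. -/
def pdy (f : Pt → ℝ) (i : Fin 2) (p : Pt) : ℝ :=
  fderiv ℝ f p ((0 : Fin 2 → ℝ), Pi.single i 1)

/-- `f_{;1} = y^i ∂f/∂y^i`. -/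
def vd1 (f : Pt → ℝ) (p : Pt) : ℝ := ∑ i, p.2 i * pdy f i p

/-- The family of spray coefficients `G` has vanishing Berwald curvature
`∂³G^i/∂y^j∂y^k∂y^r = 0` on `A` (Berwaldian). -/
def BerwaldFlat (A : Set Pt) (G : Fin 2 → Pt → ℝ) : Prop :=
  ∀ p ∈ A, ∀ i j k r : Fin 2, pdy (pdy (pdy (G i) j) k) r p = 0

/-- A conic pseudo-Finsler surface, equipped with a modified Berwald frame
`(ℓ, m)`, signature `ε = ±1`, geodesic spray coefficients `G^i` and the main
scalar `I`. -/
structure PFSurf where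
  A : Set Pt
  openA : IsOpen A
  conicA : ∀ p ∈ A, ∀ t : ℝ, 0 < t → ((p.1, t • p.2) : Pt) ∈ A
  F : Pt → ℝ
  smF : ContDiffOn ℝ (⊤ : ℕ∞) F A
  Fne : ∀ p ∈ A, F p ≠ 0
  homF : ∀ p ∈ A, ∀ t : ℝ, 0 < t → F (p.1, t • p.2) = t * F p
  eps : ℝ
  epspm : eps = 1 ∨ eps = -1
  mlow : Fin 2 → Pt → ℝ
  mup : Fin 2 → Pt → ℝ
  smml : ∀ i, ContDiffOn ℝ (⊤ : ℕ∞) (mlow i) A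
  smmu : ∀ i, ContDiffOn ℝ (⊤ : ℕ∞) (mup i) A
  /-- the angular metric `h_{ij} = g_{ij} - ℓ_iℓ_j` equals `ε m_i m_j` -/
  angular : ∀ p ∈ A, ∀ i j : Fin 2,
    (1/2) * pdy (pdy (fun q => (F q)^2) j) i p - pdy F i p * pdy F j p
      = eps * mlow i p * mlow j p
  /-- `ℓ^i m_i = 0` -/
  ellm : ∀ p ∈ A, (∑ i, (p.2 i / F p) * mlow i p) = 0
  /-- `m^i ℓ_i = 0` -/
  mell : ∀ p ∈ A, (∑ i, mup i p * pdy F i p) = 0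
  /-- `m^i m_i = ε` -/
  mm : ∀ p ∈ A, (∑ i, mup i p * mlow i p) = eps
  /-- `m_i = g_{ij} m^j` -/
  mraise : ∀ p ∈ A, ∀ i : Fin 2,
    mlow i p = ∑ j, ((1/2) * pdy (pdy (fun q => (F q)^2) j) i p) * mup j p
  /-- nondegeneracy of the metric tensor `g_{ij} = (1/2)∂²F²/∂y^i∂y^j` -/
  nondeg : ∀ p ∈ A,
    ((1/2) * pdy (pdy (fun q => (F q)^2) 0) 0 p) *
      ((1/2) * pdy (pdy (fun q => (F q)^2) 1) 1 p) -
      ((1/2) * pdy (pdy (fun q => (F q)^2) 1) 0 p)^2 ≠ 0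
  Gs : Fin 2 → Pt → ℝ
  smG : ∀ i, ContDiffOn ℝ (⊤ : ℕ∞) (Gs i) A
  homG : ∀ p ∈ A, ∀ t : ℝ, 0 < t → ∀ i, Gs i ((p.1, t • p.2) : Pt) = t^2 * Gs i p
  /-- `G^i = (1/4) g^{ij}(y^k ∂²F²/∂x^k∂y^j − ∂F²/∂x^j)`, in the equivalent
  lowered form `∑_j g_{ij}·4G^j = y^k ∂²F²/∂x^k∂y^i − ∂F²/∂x^i` -/
  sprayEq : ∀ p ∈ A, ∀ i : Fin 2,
    (∑ j, ((1/2) * pdy (pdy (fun q => (F q)^2) j) i p) * (4 * Gs j p))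
      = (∑ k, p.2 k * pdx (pdy (fun q => (F q)^2) i) k p)
        - pdx (fun q => (F q)^2) i p
  Iscal : Pt → ℝ
  smI : ContDiffOn ℝ (⊤ : ℕ∞) Iscal A
  /-- `F C_{ijk} = I m_i m_j m_k` with `C_{ijk} = (1/4)∂³F²/∂y^i∂y^j∂y^k` -/
  cartan : ∀ p ∈ A, ∀ i j k : Fin 2,
    F p * ((1/4) * pdy (pdy (pdy (fun q => (F q)^2) k) j) i p)
      = Iscal p * mlow i p * mlow j p * mlow k p

namespace PFSurf

variable (S : PFSurf)

/-- `ℓ^i = y^i / F`. -/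
def ellUp (i : Fin 2) (p : Pt) : ℝ := p.2 i / S.F p

/-- `ℓ_i = ∂F/∂y^i`. -/
def ellLow (i : Fin 2) (p : Pt) : ℝ := pdy S.F i p

/-- `f_{;2} = ε F (∂f/∂y^i) m^i`. -/
def vd2 (f : Pt → ℝ) (p : Pt) : ℝ := S.eps * S.F p * ∑ i, pdy f i p * S.mup i p

/-- `δ_i f = ∂f/∂x^i − G^j_i ∂f/∂y^j`. -/
def hdel (f : Pt → ℝ) (i : Fin 2) (p : Pt) : ℝ :=
  pdx f i p - ∑ j, pdy (S.Gs j) i p * pdy f j p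

/-- `f_{,1} = ℓ^i δ_i f`. -/
def hd1 (f : Pt → ℝ) (p : Pt) : ℝ := ∑ i, S.ellUp i p * S.hdel f i p

/-- `f_{,2} = ε m^i δ_i f`. -/
def hd2 (f : Pt → ℝ) (p : Pt) : ℝ := S.eps * ∑ i, S.mup i p * S.hdel f i p

/-- `f` is positively homogeneous of degree `0` in `y` on `A`. -/
def Homog0 (f : Pt → ℝ) : Prop :=
  ∀ p ∈ S.A, ∀ t : ℝ, 0 < t → f ((p.1, t • p.2) : Pt) = f p

/-- `f` is horizontally constant on `A`: `δ_i f = 0`. -/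
def HorizConst (f : Pt → ℝ) : Prop := ∀ p ∈ S.A, ∀ i, S.hdel f i p = 0

end PFSurf

/-- An anisotropic conformal change `F̄ = e^φ F` of a conic pseudo-Finsler
surface: `φ` is smooth, positively `0`-homogeneous in `y`, and satisfies the
regularity condition `F²(∂²φ/∂y^i∂y^j + ∂φ/∂y^i ∂φ/∂y^j)m^i m^j + ε ≠ 0`. -/
structure AnisoChange (S : PFSurf) where
  phi : Pt → ℝ
  smphi : ContDiffOn ℝ (⊤ : ℕ∞) phi S.A
  homphi : ∀ p ∈ S.A, ∀ t : ℝ, 0 < t → phi ((p.1, t • p.2) : Pt) = phi p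
  reg : ∀ p ∈ S.A,
    (S.F p)^2 * (∑ i, ∑ j, (pdy (pdy phi j) i p + pdy phi i p * pdy phi j p)
      * S.mup i p * S.mup j p) + S.eps ≠ 0

namespace AnisoChange

variable {S : PFSurf} (C : AnisoChange S)

/-- `σ = φ_{;2;2} + εIφ_{;2} + 2(φ_{;2})²`. -/
def sigma (p : Pt) : ℝ :=
  S.vd2 (S.vd2 C.phi) p + S.eps * S.Iscal p * S.vd2 C.phi p + 2 * (S.vd2 C.phi p)^2

/-- `ρ = 1/(σ + ε − (φ_{;2})²)`. -/
def rho (p : Pt) : ℝ := 1 / (C.sigma p + S.eps - (S.vd2 C.phi p)^2)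

/-- The recurring combination `φ_{;2}φ_{,1} + φ_{,1;2} − 2φ_{,2}`. -/
def qcore (p : Pt) : ℝ :=
  S.vd2 C.phi p * S.hd1 C.phi p + S.vd2 (S.hd1 C.phi) p - 2 * S.hd2 C.phi p

/-- `2Q = ερF²(φ_{;2}φ_{,1} + φ_{,1;2} − 2φ_{,2})`. -/
def Q (p : Pt) : ℝ := (1/2) * S.eps * C.rho p * (S.F p)^2 * C.qcore p

/-- `2P = −ρF²φ_{;2}(φ_{;2}φ_{,1} + φ_{,1;2} − 2φ_{,2}) + F²φ_{,1}`. -/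
def P (p : Pt) : ℝ :=
  -(1/2) * C.rho p * (S.F p)^2 * S.vd2 C.phi p * C.qcore p
    + (1/2) * (S.F p)^2 * S.hd1 C.phi p

/-- `F̄ = e^φ F`. -/
def Fbar (p : Pt) : ℝ := Real.exp (C.phi p) * S.F p

/-- `m̄^i = e^{−φ}√(ερ)(m^i − εφ_{;2}ℓ^i)`. -/
def mbarUp (i : Fin 2) (p : Pt) : ℝ :=
  Real.exp (-C.phi p) * Real.sqrt (S.eps * C.rho p)
    * (S.mup i p - S.eps * S.vd2 C.phi p * S.ellUp i p)

/-- The main scalar of `F̄`: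
`Ī = √(ερ)(I + 2εφ_{;2} − (ε/2)(ln ρ)_{;2})`. -/
def Ibar (p : Pt) : ℝ :=
  Real.sqrt (S.eps * C.rho p) *
    (S.Iscal p + 2 * S.eps * S.vd2 C.phi p
      - (S.eps / 2) * S.vd2 (fun q => Real.log (C.rho q)) p)

/-- The geodesic spray coefficients of `F̄`: `Ḡ^i = G^i + Q m^i + P ℓ^i`. -/
def Gbar (i : Fin 2) (p : Pt) : ℝ :=
  S.Gs i p + C.Q p * S.mup i p + C.P p * S.ellUp i p

/-- `δ̄_i f = ∂f/∂x^i − Ḡ^j_i ∂f/∂y^j`. -/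
def hdelbar (f : Pt → ℝ) (i : Fin 2) (p : Pt) : ℝ :=
  pdx f i p - ∑ j, pdy (C.Gbar j) i p * pdy f j p

/-- `f_{;a} = y^i ∂f/∂y^i` (with respect to `F̄`). -/
def va (_C : AnisoChange S) (f : Pt → ℝ) (p : Pt) : ℝ := ∑ i, p.2 i * pdy f i p

/-- `f_{;b} = ε F̄ (∂f/∂y^i) m̄^i`. -/
def vb (f : Pt → ℝ) (p : Pt) : ℝ :=
  S.eps * C.Fbar p * ∑ i, pdy f i p * C.mbarUp i p

/-- `f_{,a} = ℓ̄^i δ̄_i f`. -/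
def ha (f : Pt → ℝ) (p : Pt) : ℝ := ∑ i, (p.2 i / C.Fbar p) * C.hdelbar f i p

/-- `f_{,b} = ε m̄^i δ̄_i f`. -/
def hb (f : Pt → ℝ) (p : Pt) : ℝ := S.eps * ∑ i, C.mbarUp i p * C.hdelbar f i p

/-- `F̄` is Landsbergian: `Ī_{,a} = 0` on `A`. -/
def LandsbergBar : Prop := ∀ p ∈ S.A, C.ha C.Ibar p = 0

/-- `F̄` is Berwaldian (via the main scalar): `Ī_{,a} = Ī_{,b} = 0` on `A`. -/
def BerwaldBarScal : Prop :=
  ∀ p ∈ S.A, C.ha C.Ibar p = 0 ∧ C.hb C.Ibar p = 0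

/-- `Ī_2 = Ī_{,a;b} + Ī_{,b}` (with respect to `F̄`). -/
def I2bar (p : Pt) : ℝ := C.vb (C.ha C.Ibar) p + C.hb C.Ibar p

/-- `F̄` is of Douglas type: `6Ī_{,a} + εĪ_{2;b} + 2Ī·Ī_2 = 0` on `A`. -/
def DouglasBar : Prop :=
  ∀ p ∈ S.A,
    6 * C.ha C.Ibar p + S.eps * C.vb C.I2bar p + 2 * C.Ibar p * C.I2bar p = 0

/-- The candidate symmetric tensor `M^i_{jk}` of the paper. -/
def Mt (i j k : Fin 2) (p : Pt) : ℝ :=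
  (1/(S.F p)^2) *
    (2 * (C.P p * S.ellUp i p + C.Q p * S.mup i p) * S.ellLow j p * S.ellLow k p
      + ((S.vd2 C.P p - C.Q p) * S.ellUp i p
          + (S.eps * C.P p + S.vd2 C.Q p) * S.mup i p)
          * (S.ellLow j p * S.mlow k p + S.ellLow k p * S.mlow j p)
      + ((S.eps * C.P p + S.vd2 (S.vd2 C.P) p - 2 * S.vd2 C.Q p) * S.ellUp i p
          + (2 * S.eps * S.vd2 C.P p + S.eps * C.Q p + S.vd2 (S.vd2 C.Q) p)
            * S.mup i p)
          * S.mlow j p * S.mlow k p)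

/-- The function `ψ` with
`F²ψ = (−3+I_{;2})εQ + (1+I_{;2}+2εI²)εP_{;2} + P_{;2;2;2} − 3Q_{;2;2}
       + 3εI P_{;2;2} − 3εI Q_{;2} + 2IP`. -/
def psiF (p : Pt) : ℝ :=
  (1/(S.F p)^2) *
    ((-3 + S.vd2 S.Iscal p) * S.eps * C.Q p
      + (1 + S.vd2 S.Iscal p + 2 * S.eps * (S.Iscal p)^2) * S.eps * S.vd2 C.P p
      + S.vd2 (S.vd2 (S.vd2 C.P)) p - 3 * S.vd2 (S.vd2 C.Q) p
      + 3 * S.eps * S.Iscal p * S.vd2 (S.vd2 C.P) p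
      - 3 * S.eps * S.Iscal p * S.vd2 C.Q p + 2 * S.Iscal p * C.P p)

/-- The function `χ` with
`F²χ = 3P − (I+εI_{;2;2}+I·I_{;2})Q − (2εI_{;2}+I²−ε)Q_{;2} + 3εP_{;2;2}
       + Q_{;2;2;2} + 3I P_{;2}`. -/
def chiF (p : Pt) : ℝ :=
  (1/(S.F p)^2) *
    (3 * C.P p
      - (S.Iscal p + S.eps * S.vd2 (S.vd2 S.Iscal) p
          + S.Iscal p * S.vd2 S.Iscal p) * C.Q p
      - (2 * S.eps * S.vd2 S.Iscal p + (S.Iscal p)^2 - S.eps) * S.vd2 C.Q p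
      + 3 * S.eps * S.vd2 (S.vd2 C.P) p + S.vd2 (S.vd2 (S.vd2 C.Q)) p
      + 3 * S.Iscal p * S.vd2 C.P p)

end AnisoChange

section Stmt3Aux

open Filter Topology

private lemma pdy_congr_nhds {f g : Pt → ℝ} {p : Pt} (h : f =ᶠ[nhds p] g) (i : Fin 2) :
    pdy f i p = pdy g i p := by
  unfold pdy; rw [h.fderiv_eq]

private lemma pdy_add' {f g : Pt → ℝ} {p : Pt} (hf : DifferentiableAt ℝ f p)
    (hg : DifferentiableAt ℝ g p) (i : Fin 2) :
    pdy (fun q => f q + g q) i p = pdy f i p + pdy g i p := by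
  unfold pdy; rw [fderiv_fun_add hf hg]; simp

private lemma pdy_mul' {f g : Pt → ℝ} {p : Pt} (hf : DifferentiableAt ℝ f p)
    (hg : DifferentiableAt ℝ g p) (i : Fin 2) :
    pdy (fun q => f q * g q) i p = pdy f i p * g p + f p * pdy g i p := by
  unfold pdy; rw [fderiv_fun_mul hf hg]; simp; ring

private lemma pdy_const_mul' {f : Pt → ℝ} {p : Pt} (hf : DifferentiableAt ℝ f p)
    (c : ℝ) (i : Fin 2) :
    pdy (fun q => c * f q) i p = c * pdy f i p := by
  unfold pdy; rw [fderiv_const_mul hf c]; simp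

private lemma pdy_const' (c : ℝ) (i : Fin 2) (p : Pt) : pdy (fun _ => c) i p = 0 := by
  unfold pdy; simp

private lemma pdy_contDiffOn' {A : Set Pt} (hA : IsOpen A) {f : Pt → ℝ}
    (hf : ContDiffOn ℝ (⊤ : ℕ∞) f A) (i : Fin 2) :
    ContDiffOn ℝ (⊤ : ℕ∞) (pdy f i) A := by
  unfold pdy
  exact (hf.fderiv_of_isOpen hA (by simp)).clm_apply contDiffOn_const

private lemma pdx_contDiffOn' {A : Set Pt} (hA : IsOpen A) {f : Pt → ℝ}
    (hf : ContDiffOn ℝ (⊤ : ℕ∞) f A) (i : Fin 2) :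
    ContDiffOn ℝ (⊤ : ℕ∞) (pdx f i) A := by
  unfold pdx
  exact (hf.fderiv_of_isOpen hA (by simp)).clm_apply contDiffOn_const

private lemma covec {y a b : Fin 2 → ℝ} (hy : ¬(y 0 = 0 ∧ y 1 = 0))
    (ha : a 0 * y 0 + a 1 * y 1 = 0) (hb : b 0 * y 0 + b 1 * y 1 = 0)
    (hbne : ¬(b 0 = 0 ∧ b 1 = 0)) : ∃ β : ℝ, a 0 = β * b 0 ∧ a 1 = β * b 1 := by
  have hdet : a 0 * b 1 - a 1 * b 0 = 0 := by
    rcases not_and_or.mp hy with h0 | h1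
    · have h : (a 0 * b 1 - a 1 * b 0) * y 0
          = b 1 * (a 0 * y 0 + a 1 * y 1) - a 1 * (b 0 * y 0 + b 1 * y 1) := by ring
      rw [ha, hb] at h
      simpa [h0] using mul_eq_zero.mp (by linarith : (a 0 * b 1 - a 1 * b 0) * y 0 = 0)
    · have h : (a 0 * b 1 - a 1 * b 0) * y 1
          = a 0 * (b 0 * y 0 + b 1 * y 1) - b 0 * (a 0 * y 0 + a 1 * y 1) := by ring
      rw [ha, hb] at h
      simpa [h1] using mul_eq_zero.mp (by linarith : (a 0 * b 1 - a 1 * b 0) * y 1 = 0)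
  rcases not_and_or.mp hbne with h0 | h1
  · refine ⟨a 0 / b 0, by field_simp, ?_⟩
    field_simp
    nlinarith [hdet]
  · refine ⟨a 1 / b 1, ?_, by field_simp⟩
    field_simp
    nlinarith [hdet]

end Stmt3Aux
/-- Under the anisotropic conformal change, the identity
`φ_{;2}P + P_{;2} + εφ_{;2}Q_{;2} − (Iφ_{;2} + 1)Q − F²φ_{,2} = 0` holds on `A`. -/
theorem statement3 (S : PFSurf) (C : AnisoChange S) :
    ∀ p ∈ S.A,
      S.vd2 C.phi p * C.P p + S.vd2 C.P p + S.eps * S.vd2 C.phi p * S.vd2 C.Q p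
        - (S.Iscal p * S.vd2 C.phi p + 1) * C.Q p
        - (S.F p)^2 * S.hd2 C.phi p = 0 := by
  intro p hp
  have hmem : S.A ∈ nhds p := S.openA.mem_nhds hp
  have hdA : ∀ {f : Pt → ℝ}, ContDiffOn ℝ (⊤ : ℕ∞) f S.A → DifferentiableAt ℝ f p :=
    fun h => (h.differentiableOn (by simp)).differentiableAt hmem
  have hF0 : S.F p ≠ 0 := S.Fne p hp
  have hε2 : S.eps * S.eps = 1 := by rcases S.epspm with h | h <;> rw [h] <;> norm_num
  have hεne : S.eps ≠ 0 := by rcases S.epspm with h | h <;> rw [h] <;> norm_num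
  -- y ≠ 0
  have hy : ¬(p.2 0 = 0 ∧ p.2 1 = 0) := by
    rintro ⟨h0, h1⟩
    have hp2 : p.2 = 0 := by funext i; fin_cases i <;> assumption
    have hpt : ((p.1, (2:ℝ) • p.2) : Pt) = p := by rw [hp2, smul_zero, ← hp2]
    have h2 := S.homF p hp 2 (by norm_num)
    rw [hpt] at h2
    have : S.F p = 0 := by linarith
    exact hF0 this
  -- basic contractions
  have hmell : S.mup 0 p * pdy S.F 0 p + S.mup 1 p * pdy S.F 1 p = 0 := by
    have h := S.mell p hp; simpa [Fin.sum_univ_two] using h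
  have hmm2 : S.mup 0 p * S.mlow 0 p + S.mup 1 p * S.mlow 1 p = S.eps := by
    have h := S.mm p hp; simpa [Fin.sum_univ_two] using h
  have hyml : p.2 0 * S.mlow 0 p + p.2 1 * S.mlow 1 p = 0 := by
    have h := S.ellm p hp
    simp only [Fin.sum_univ_two] at h
    field_simp at h
    linarith
  -- Euler identity for φ
  have hEuler : p.2 0 * pdy C.phi 0 p + p.2 1 * pdy C.phi 1 p = 0 := by
    have hφd : DifferentiableAt ℝ C.phi p := hdA C.smphi
    have h1 : HasDerivAt (fun t : ℝ => t • (((0 : Fin 2 → ℝ), p.2) : Pt))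
        (((0 : Fin 2 → ℝ), p.2) : Pt) 1 := by
      simpa using (hasDerivAt_id (1:ℝ)).smul_const (((0 : Fin 2 → ℝ), p.2) : Pt)
    have hfun : (fun t : ℝ => ((p.1, t • p.2) : Pt))
        = (fun t : ℝ => ((p.1, (0 : Fin 2 → ℝ)) : Pt)
            + t • (((0 : Fin 2 → ℝ), p.2) : Pt)) := by
      funext t
      simp [Prod.ext_iff]
    have hc : HasDerivAt (fun t : ℝ => ((p.1, t • p.2) : Pt))
        (((0 : Fin 2 → ℝ), p.2) : Pt) 1 := by
      rw [hfun]; exact h1.const_add _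
    have hpt1 : ((p.1, (1:ℝ) • p.2) : Pt) = p := by simp
    have hFD : HasFDerivAt C.phi (fderiv ℝ C.phi p) ((p.1, (1:ℝ) • p.2) : Pt) := by
      rw [hpt1]; exact hφd.hasFDerivAt
    have hder : HasDerivAt (C.phi ∘ (fun t : ℝ => ((p.1, t • p.2) : Pt)))
        (fderiv ℝ C.phi p (((0 : Fin 2 → ℝ), p.2) : Pt)) 1 :=
      HasFDerivAt.comp_hasDerivAt 1 hFD hc
    have hloc : (fun _ : ℝ => C.phi p)
        =ᶠ[nhds (1:ℝ)] (C.phi ∘ (fun t : ℝ => ((p.1, t • p.2) : Pt))) := by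
      filter_upwards [Ioi_mem_nhds (by norm_num : (0:ℝ) < 1)] with t ht
      exact (C.homphi p hp t ht).symm
    have h0 : HasDerivAt (C.phi ∘ (fun t : ℝ => ((p.1, t • p.2) : Pt))) 0 1 :=
      (hasDerivAt_const (1:ℝ) (C.phi p)).congr_of_eventuallyEq hloc.symm
    have hval : fderiv ℝ C.phi p (((0 : Fin 2 → ℝ), p.2) : Pt) = 0 := hder.unique h0
    have hsplit : (((0 : Fin 2 → ℝ), p.2) : Pt)
        = p.2 0 • (((0 : Fin 2 → ℝ), Pi.single 0 1) : Pt)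
          + p.2 1 • (((0 : Fin 2 → ℝ), Pi.single 1 1) : Pt) := by
      rw [Prod.ext_iff]
      constructor
      · simp
      · funext i
        fin_cases i <;> simp [Pi.single_apply]
    rw [hsplit, map_add, map_smul, map_smul] at hval
    simpa [pdy, smul_eq_mul] using hval
  -- beta decomposition: dφ is proportional to m_low
  obtain ⟨β, hβ0, hβ1⟩ : ∃ β : ℝ, pdy C.phi 0 p = β * S.mlow 0 p ∧ pdy C.phi 1 p = β * S.mlow 1 p := by
    refine covec (y := p.2) (a := fun i => pdy C.phi i p) (b := fun i => S.mlow i p) hy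
      (by linear_combination hEuler) (by linear_combination hyml) ?_
    rintro ⟨h0, h1⟩
    have h0' : S.mlow 0 p = 0 := h0
    have h1' : S.mlow 1 p = 0 := h1
    rw [h0', h1'] at hmm2
    simp at hmm2
    exact hεne hmm2.symm
  -- differentiability facts
  have cF : ContDiffOn ℝ (⊤ : ℕ∞) S.F S.A := S.smF
  have cF2 : ContDiffOn ℝ (⊤ : ℕ∞) (fun q => (S.F q)^2) S.A := cF.pow 2
  have dmu : ∀ i, DifferentiableAt ℝ (S.mup i) p := fun i => hdA (S.smmu i)
  have dml : ∀ i, DifferentiableAt ℝ (S.mlow i) p := fun i => hdA (S.smml i)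
  have cpdyφ : ∀ j, ContDiffOn ℝ (⊤ : ℕ∞) (pdy C.phi j) S.A := fun j => pdy_contDiffOn' S.openA C.smphi j
  have dpdyφ : ∀ j, DifferentiableAt ℝ (pdy C.phi j) p := fun j => hdA (cpdyφ j)
  have cg : ∀ j k : Fin 2, ContDiffOn ℝ (⊤ : ℕ∞) (pdy (pdy (fun q => (S.F q)^2) k) j) S.A :=
    fun j k => pdy_contDiffOn' S.openA (pdy_contDiffOn' S.openA cF2 k) j
  have dg : ∀ j k : Fin 2, DifferentiableAt ℝ (pdy (pdy (fun q => (S.F q)^2) k) j) p :=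
    fun j k => hdA (cg j k)
  -- differentiated m^i m_i = eps identity
  have hDmm : ∀ r : Fin 2,
      (pdy (S.mup 0) r p * S.mlow 0 p + S.mup 0 p * pdy (S.mlow 0) r p)
      + (pdy (S.mup 1) r p * S.mlow 1 p + S.mup 1 p * pdy (S.mlow 1) r p) = 0 := by
    intro r
    have hfe : (fun q => S.mup 0 q * S.mlow 0 q + S.mup 1 q * S.mlow 1 q)
        =ᶠ[nhds p] (fun _ => S.eps) := by
      filter_upwards [hmem] with q hq
      have h := S.mm q hq
      simpa [Fin.sum_univ_two] using h
    have h0 := pdy_congr_nhds hfe r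
    rw [pdy_add' (f := fun q => S.mup 0 q * S.mlow 0 q) (g := fun q => S.mup 1 q * S.mlow 1 q)
        ((dmu 0).mul (dml 0)) ((dmu 1).mul (dml 1)) r,
      pdy_mul' (dmu 0) (dml 0) r, pdy_mul' (dmu 1) (dml 1) r, pdy_const' S.eps r p] at h0
    linarith
  -- differentiated m-raising identity
  have hDml : ∀ j r : Fin 2, S.F p * pdy (S.mlow j) r p
      = 2 * S.Iscal p * S.eps * S.mlow r p * S.mlow j p
        + S.F p * (pdy S.F j p * (pdy S.F 0 p * pdy (S.mup 0) r p + pdy S.F 1 p * pdy (S.mup 1) r p)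
          + S.eps * S.mlow j p * (S.mlow 0 p * pdy (S.mup 0) r p + S.mlow 1 p * pdy (S.mup 1) r p)) := by
    intro j r
    have hfe : S.mlow j =ᶠ[nhds p]
        (fun q => (1/2) * pdy (pdy (fun q' => (S.F q')^2) 0) j q * S.mup 0 q
          + (1/2) * pdy (pdy (fun q' => (S.F q')^2) 1) j q * S.mup 1 q) := by
      filter_upwards [hmem] with q hq
      have h := S.mraise q hq j
      simpa [Fin.sum_univ_two] using h
    have h0 := pdy_congr_nhds hfe r
    rw [pdy_add' (f := fun q => (1/2) * pdy (pdy (fun q' => (S.F q')^2) 0) j q * S.mup 0 q)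
        (g := fun q => (1/2) * pdy (pdy (fun q' => (S.F q')^2) 1) j q * S.mup 1 q)
        (((dg j 0).const_mul (1/2)).mul (dmu 0)) (((dg j 1).const_mul (1/2)).mul (dmu 1)) r] at h0
    rw [pdy_mul' (f := fun q => (1/2) * pdy (pdy (fun q' => (S.F q')^2) 0) j q) (g := S.mup 0)
        ((dg j 0).const_mul (1/2)) (dmu 0) r] at h0
    rw [pdy_mul' (f := fun q => (1/2) * pdy (pdy (fun q' => (S.F q')^2) 1) j q) (g := S.mup 1)
        ((dg j 1).const_mul (1/2)) (dmu 1) r] at h0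
    rw [pdy_const_mul' (dg j 0) (1/2) r, pdy_const_mul' (dg j 1) (1/2) r] at h0
    have hc30 : S.F p * ((1/2) * pdy (pdy (pdy (fun q => (S.F q)^2) 0) j) r p)
        = 2 * S.Iscal p * S.mlow r p * S.mlow j p * S.mlow 0 p := by
      have h := S.cartan p hp r j 0; linarith
    have hc31 : S.F p * ((1/2) * pdy (pdy (pdy (fun q => (S.F q)^2) 1) j) r p)
        = 2 * S.Iscal p * S.mlow r p * S.mlow j p * S.mlow 1 p := by
      have h := S.cartan p hp r j 1; linarith
    have hang0 : (1/2) * pdy (pdy (fun q => (S.F q)^2) 0) j p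
        = pdy S.F j p * pdy S.F 0 p + S.eps * S.mlow j p * S.mlow 0 p := by
      have h := S.angular p hp j 0; linarith
    have hang1 : (1/2) * pdy (pdy (fun q => (S.F q)^2) 1) j p
        = pdy S.F j p * pdy S.F 1 p + S.eps * S.mlow j p * S.mlow 1 p := by
      have h := S.angular p hp j 1; linarith
    linear_combination (S.F p) * h0 + S.mup 0 p * hc30 + S.mup 1 p * hc31
      + (S.F p * pdy (S.mup 0) r p) * hang0 + (S.F p * pdy (S.mup 1) r p) * hang1
      + (2 * S.Iscal p * S.mlow r p * S.mlow j p) * hmm2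
  -- the contracted quantity T = eps m^r m_k (∂ m^k / ∂ y^r)
  have hT : S.F p * (S.mup 0 p * (S.mlow 0 p * pdy (S.mup 0) 0 p + S.mlow 1 p * pdy (S.mup 1) 0 p)
        + S.mup 1 p * (S.mlow 0 p * pdy (S.mup 0) 1 p + S.mlow 1 p * pdy (S.mup 1) 1 p))
      = -(S.eps * S.Iscal p) := by
    have h1 : S.F p * (S.mup 0 p * (S.mlow 0 p * pdy (S.mup 0) 0 p + S.mlow 1 p * pdy (S.mup 1) 0 p)
          + S.mup 1 p * (S.mlow 0 p * pdy (S.mup 0) 1 p + S.mlow 1 p * pdy (S.mup 1) 1 p))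
        + (S.mup 0 p * (S.mup 0 p * (S.F p * pdy (S.mlow 0) 0 p) + S.mup 1 p * (S.F p * pdy (S.mlow 1) 0 p))
          + S.mup 1 p * (S.mup 0 p * (S.F p * pdy (S.mlow 0) 1 p) + S.mup 1 p * (S.F p * pdy (S.mlow 1) 1 p))) = 0 := by
      linear_combination (S.F p * S.mup 0 p) * hDmm 0 + (S.F p * S.mup 1 p) * hDmm 1
    have h2 : (S.mup 0 p * (S.mup 0 p * (S.F p * pdy (S.mlow 0) 0 p) + S.mup 1 p * (S.F p * pdy (S.mlow 1) 0 p))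
          + S.mup 1 p * (S.mup 0 p * (S.F p * pdy (S.mlow 0) 1 p) + S.mup 1 p * (S.F p * pdy (S.mlow 1) 1 p)))
        = 2 * S.Iscal p * S.eps * (S.mup 0 p * S.mlow 0 p + S.mup 1 p * S.mlow 1 p)
            * (S.mup 0 p * S.mlow 0 p + S.mup 1 p * S.mlow 1 p)
          + (S.mup 0 p * pdy S.F 0 p + S.mup 1 p * pdy S.F 1 p)
            * (S.F p * (S.mup 0 p * (pdy S.F 0 p * pdy (S.mup 0) 0 p + pdy S.F 1 p * pdy (S.mup 1) 0 p)
              + S.mup 1 p * (pdy S.F 0 p * pdy (S.mup 0) 1 p + pdy S.F 1 p * pdy (S.mup 1) 1 p)))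
          + S.eps * (S.mup 0 p * S.mlow 0 p + S.mup 1 p * S.mlow 1 p)
            * (S.F p * (S.mup 0 p * (S.mlow 0 p * pdy (S.mup 0) 0 p + S.mlow 1 p * pdy (S.mup 1) 0 p)
              + S.mup 1 p * (S.mlow 0 p * pdy (S.mup 0) 1 p + S.mlow 1 p * pdy (S.mup 1) 1 p))) := by
      linear_combination (S.mup 0 p * S.mup 0 p) * hDml 0 0 + (S.mup 0 p * S.mup 1 p) * hDml 1 0
        + (S.mup 1 p * S.mup 0 p) * hDml 0 1 + (S.mup 1 p * S.mup 1 p) * hDml 1 1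
    rw [hmm2, hmell] at h2
    linear_combination (1/2) * h1 - (1/2) * h2
      - ((1/2) * (S.F p * (S.mup 0 p * (S.mlow 0 p * pdy (S.mup 0) 0 p + S.mlow 1 p * pdy (S.mup 1) 0 p)
          + S.mup 1 p * (S.mlow 0 p * pdy (S.mup 0) 1 p + S.mlow 1 p * pdy (S.mup 1) 1 p)))
        + S.eps * S.Iscal p) * hε2
  -- vd2 of phi as explicit function
  have hvd2φfun : S.vd2 C.phi = fun q => S.eps * S.F q
      * (pdy C.phi 0 q * S.mup 0 q + pdy C.phi 1 q * S.mup 1 q) := by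
    funext q; simp [PFSurf.vd2, Fin.sum_univ_two]
  have cvd2φ : ContDiffOn ℝ (⊤ : ℕ∞) (S.vd2 C.phi) S.A := by
    rw [hvd2φfun]
    exact (contDiffOn_const.mul cF).mul
      (((cpdyφ 0).mul (S.smmu 0)).add ((cpdyφ 1).mul (S.smmu 1)))
  have hpdyvd2φ : ∀ i : Fin 2, pdy (S.vd2 C.phi) i p
      = S.eps * pdy S.F i p * (pdy C.phi 0 p * S.mup 0 p + pdy C.phi 1 p * S.mup 1 p)
        + S.eps * S.F p * (pdy (pdy C.phi 0) i p * S.mup 0 p + pdy C.phi 0 p * pdy (S.mup 0) i p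
          + (pdy (pdy C.phi 1) i p * S.mup 1 p + pdy C.phi 1 p * pdy (S.mup 1) i p)) := by
    intro i
    rw [hvd2φfun]
    rw [pdy_mul' (f := fun q => S.eps * S.F q)
        (g := fun q => pdy C.phi 0 q * S.mup 0 q + pdy C.phi 1 q * S.mup 1 q)
        ((hdA cF).const_mul S.eps)
        (((dpdyφ 0).mul (dmu 0)).add ((dpdyφ 1).mul (dmu 1))) i]
    rw [pdy_const_mul' (hdA cF) S.eps i]
    rw [pdy_add' (f := fun q => pdy C.phi 0 q * S.mup 0 q)
        (g := fun q => pdy C.phi 1 q * S.mup 1 q)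
        ((dpdyφ 0).mul (dmu 0)) ((dpdyφ 1).mul (dmu 1)) i]
    rw [pdy_mul' (dpdyφ 0) (dmu 0) i, pdy_mul' (dpdyφ 1) (dmu 1) i]
  -- second vertical derivative of phi
  have hφ22 : S.vd2 (S.vd2 C.phi) p
      = (S.F p)^2 * (pdy (pdy C.phi 0) 0 p * S.mup 0 p * S.mup 0 p
          + pdy (pdy C.phi 1) 0 p * S.mup 0 p * S.mup 1 p
          + pdy (pdy C.phi 0) 1 p * S.mup 1 p * S.mup 0 p
          + pdy (pdy C.phi 1) 1 p * S.mup 1 p * S.mup 1 p)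
        - S.Iscal p * S.F p * (pdy C.phi 0 p * S.mup 0 p + pdy C.phi 1 p * S.mup 1 p) := by
    have e0 : S.vd2 (S.vd2 C.phi) p = S.eps * S.F p
        * (pdy (S.vd2 C.phi) 0 p * S.mup 0 p + pdy (S.vd2 C.phi) 1 p * S.mup 1 p) := by
      simp only [PFSurf.vd2, Fin.sum_univ_two]
    rw [e0, hpdyvd2φ 0, hpdyvd2φ 1, hβ0, hβ1]
    linear_combination
      (S.F p * β * (S.mlow 0 p * S.mup 0 p + S.mlow 1 p * S.mup 1 p)
          * (S.mup 0 p * pdy S.F 0 p + S.mup 1 p * pdy S.F 1 p)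
        + (S.F p)^2 * (pdy (pdy C.phi 0) 0 p * S.mup 0 p * S.mup 0 p
          + pdy (pdy C.phi 1) 0 p * S.mup 0 p * S.mup 1 p
          + pdy (pdy C.phi 0) 1 p * S.mup 1 p * S.mup 0 p
          + pdy (pdy C.phi 1) 1 p * S.mup 1 p * S.mup 1 p)
        + (S.F p)^2 * β * (S.mup 0 p * (S.mlow 0 p * pdy (S.mup 0) 0 p + S.mlow 1 p * pdy (S.mup 1) 0 p)
          + S.mup 1 p * (S.mlow 0 p * pdy (S.mup 0) 1 p + S.mlow 1 p * pdy (S.mup 1) 1 p))) * hε2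
      + (S.F p * β * (S.mlow 0 p * S.mup 0 p + S.mlow 1 p * S.mup 1 p)) * hmell
      + (S.F p * β) * hT
      + (S.Iscal p * S.F p * β) * hmm2
  have hvd2φval : S.vd2 C.phi p = S.eps * S.F p
      * (pdy C.phi 0 p * S.mup 0 p + pdy C.phi 1 p * S.mup 1 p) := by
    simp [PFSurf.vd2, Fin.sum_univ_two]
  -- the regularity denominator
  have hDval : C.sigma p + S.eps - (S.vd2 C.phi p)^2
      = (S.F p)^2 * ((pdy (pdy C.phi 0) 0 p + pdy C.phi 0 p * pdy C.phi 0 p) * S.mup 0 p * S.mup 0 p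
          + (pdy (pdy C.phi 1) 0 p + pdy C.phi 0 p * pdy C.phi 1 p) * S.mup 0 p * S.mup 1 p
          + ((pdy (pdy C.phi 0) 1 p + pdy C.phi 1 p * pdy C.phi 0 p) * S.mup 1 p * S.mup 0 p
          + (pdy (pdy C.phi 1) 1 p + pdy C.phi 1 p * pdy C.phi 1 p) * S.mup 1 p * S.mup 1 p))
        + S.eps := by
    have hsig : C.sigma p = S.vd2 (S.vd2 C.phi) p
        + S.eps * S.Iscal p * S.vd2 C.phi p + 2 * (S.vd2 C.phi p)^2 := rfl
    rw [hsig, hφ22, hvd2φval]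
    linear_combination (S.Iscal p * S.F p * (pdy C.phi 0 p * S.mup 0 p + pdy C.phi 1 p * S.mup 1 p)
      + (S.F p)^2 * (pdy C.phi 0 p * S.mup 0 p + pdy C.phi 1 p * S.mup 1 p)
        * (pdy C.phi 0 p * S.mup 0 p + pdy C.phi 1 p * S.mup 1 p)) * hε2
  have hDne : C.sigma p + S.eps - (S.vd2 C.phi p)^2 ≠ 0 := by
    rw [hDval]
    intro h0
    apply C.reg p hp
    simp only [Fin.sum_univ_two]
    linear_combination h0
  have hρD : C.rho p * (C.sigma p + S.eps - (S.vd2 C.phi p)^2) = 1 := by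
    have h : C.rho p = 1 / (C.sigma p + S.eps - (S.vd2 C.phi p)^2) := rfl
    rw [h]
    field_simp
  -- smoothness of hd1, hd2, qcore, sigma
  have cproj : ∀ i : Fin 2, ContDiffOn ℝ (⊤ : ℕ∞) (fun q : Pt => q.2 i) S.A := fun i =>
    (((ContinuousLinearMap.proj i).comp
      (ContinuousLinearMap.snd ℝ (Fin 2 → ℝ) (Fin 2 → ℝ))).contDiff).contDiffOn
  have cpdx : ∀ i, ContDiffOn ℝ (⊤ : ℕ∞) (pdx C.phi i) S.A := fun i => pdx_contDiffOn' S.openA C.smphi i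
  have cpdyG : ∀ j i : Fin 2, ContDiffOn ℝ (⊤ : ℕ∞) (pdy (S.Gs j) i) S.A := fun j i =>
    pdy_contDiffOn' S.openA (S.smG j) i
  have hd1fun : S.hd1 C.phi = fun q =>
      (q.2 0 / S.F q) * (pdx C.phi 0 q
          - (pdy (S.Gs 0) 0 q * pdy C.phi 0 q + pdy (S.Gs 1) 0 q * pdy C.phi 1 q))
      + (q.2 1 / S.F q) * (pdx C.phi 1 q
          - (pdy (S.Gs 0) 1 q * pdy C.phi 0 q + pdy (S.Gs 1) 1 q * pdy C.phi 1 q)) := by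
    funext q; simp [PFSurf.hd1, PFSurf.hdel, PFSurf.ellUp, Fin.sum_univ_two]
  have chd1 : ContDiffOn ℝ (⊤ : ℕ∞) (S.hd1 C.phi) S.A := by
    rw [hd1fun]
    exact (((cproj 0).div cF (fun q hq => S.Fne q hq)).mul
        ((cpdx 0).sub (((cpdyG 0 0).mul (cpdyφ 0)).add ((cpdyG 1 0).mul (cpdyφ 1))))).add
      (((cproj 1).div cF (fun q hq => S.Fne q hq)).mul
        ((cpdx 1).sub (((cpdyG 0 1).mul (cpdyφ 0)).add ((cpdyG 1 1).mul (cpdyφ 1)))))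
  have hd2fun : S.hd2 C.phi = fun q => S.eps *
      (S.mup 0 q * (pdx C.phi 0 q
          - (pdy (S.Gs 0) 0 q * pdy C.phi 0 q + pdy (S.Gs 1) 0 q * pdy C.phi 1 q))
      + S.mup 1 q * (pdx C.phi 1 q
          - (pdy (S.Gs 0) 1 q * pdy C.phi 0 q + pdy (S.Gs 1) 1 q * pdy C.phi 1 q))) := by
    funext q; simp [PFSurf.hd2, PFSurf.hdel, Fin.sum_univ_two]
  have chd2 : ContDiffOn ℝ (⊤ : ℕ∞) (S.hd2 C.phi) S.A := by
    rw [hd2fun]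
    exact contDiffOn_const.mul
      (((S.smmu 0).mul
        ((cpdx 0).sub (((cpdyG 0 0).mul (cpdyφ 0)).add ((cpdyG 1 0).mul (cpdyφ 1))))).add
      ((S.smmu 1).mul
        ((cpdx 1).sub (((cpdyG 0 1).mul (cpdyφ 0)).add ((cpdyG 1 1).mul (cpdyφ 1))))))
  have cvd2hd1 : ContDiffOn ℝ (⊤ : ℕ∞) (S.vd2 (S.hd1 C.phi)) S.A := by
    have h : S.vd2 (S.hd1 C.phi) = fun q => S.eps * S.F q
        * (pdy (S.hd1 C.phi) 0 q * S.mup 0 q + pdy (S.hd1 C.phi) 1 q * S.mup 1 q) := by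
      funext q; simp [PFSurf.vd2, Fin.sum_univ_two]
    rw [h]
    exact (contDiffOn_const.mul cF).mul
      (((pdy_contDiffOn' S.openA chd1 0).mul (S.smmu 0)).add
        ((pdy_contDiffOn' S.openA chd1 1).mul (S.smmu 1)))
  have cqc : ContDiffOn ℝ (⊤ : ℕ∞) C.qcore S.A := by
    have h : C.qcore = fun q => S.vd2 C.phi q * S.hd1 C.phi q
        + S.vd2 (S.hd1 C.phi) q - 2 * S.hd2 C.phi q := rfl
    rw [h]
    exact ((cvd2φ.mul chd1).add cvd2hd1).sub (contDiffOn_const.mul chd2)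
  have cvd2vd2φ : ContDiffOn ℝ (⊤ : ℕ∞) (S.vd2 (S.vd2 C.phi)) S.A := by
    have h : S.vd2 (S.vd2 C.phi) = fun q => S.eps * S.F q
        * (pdy (S.vd2 C.phi) 0 q * S.mup 0 q + pdy (S.vd2 C.phi) 1 q * S.mup 1 q) := by
      funext q; simp [PFSurf.vd2, Fin.sum_univ_two]
    rw [h]
    exact (contDiffOn_const.mul cF).mul
      (((pdy_contDiffOn' S.openA cvd2φ 0).mul (S.smmu 0)).add
        ((pdy_contDiffOn' S.openA cvd2φ 1).mul (S.smmu 1)))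
  have cden : ContDiffOn ℝ (⊤ : ℕ∞) (fun q => C.sigma q + S.eps - (S.vd2 C.phi q)^2) S.A := by
    have h : (fun q => C.sigma q + S.eps - (S.vd2 C.phi q)^2)
        = fun q => (S.vd2 (S.vd2 C.phi) q + S.eps * S.Iscal q * S.vd2 C.phi q
            + 2 * (S.vd2 C.phi q)^2 + S.eps) - (S.vd2 C.phi q)^2 := rfl
    rw [h]
    exact (((cvd2vd2φ.add ((contDiffOn_const.mul S.smI).mul cvd2φ)).add
      (contDiffOn_const.mul (cvd2φ.pow 2))).add contDiffOn_const).sub (cvd2φ.pow 2)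
  have dρ : DifferentiableAt ℝ C.rho p := by
    have h : C.rho = fun q => (C.sigma q + S.eps - (S.vd2 C.phi q)^2)⁻¹ := by
      funext q; simp [AnisoChange.rho, one_div]
    rw [h]
    exact (hdA cden).inv hDne
  have dqc : DifferentiableAt ℝ C.qcore p := hdA cqc
  have dh1 : DifferentiableAt ℝ (S.hd1 C.phi) p := hdA chd1
  have dF2 : DifferentiableAt ℝ (fun q => (S.F q)^2) p := hdA cF2
  have dvd2φ : DifferentiableAt ℝ (S.vd2 C.phi) p := hdA cvd2φ
  have dF : DifferentiableAt ℝ S.F p := hdA cF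
  have hpdyF2 : ∀ i, pdy (fun q => (S.F q)^2) i p = 2 * S.F p * pdy S.F i p := by
    intro i
    have h2 : (fun q => (S.F q)^2) = fun q => S.F q * S.F q := by funext q; ring
    rw [h2, pdy_mul' dF dF i]; ring
  -- Leibniz expansion of Q
  have hpdyQ : ∀ i, pdy C.Q i p = (1/2*S.eps) * (pdy C.rho i p * ((S.F p)^2 * C.qcore p)
      + C.rho p * (2 * S.F p * pdy S.F i p * C.qcore p + (S.F p)^2 * pdy C.qcore i p)) := by
    intro i
    have hfun : C.Q = fun q => (1/2*S.eps) * (C.rho q * ((S.F q)^2 * C.qcore q)) := by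
      funext q; simp only [AnisoChange.Q]; ring
    rw [hfun]
    rw [pdy_const_mul' (f := fun q => C.rho q * ((S.F q)^2 * C.qcore q)) (dρ.mul (dF2.mul dqc)) (1/2*S.eps) i]
    rw [pdy_mul' (f := C.rho) (g := fun q => (S.F q)^2 * C.qcore q) dρ (dF2.mul dqc) i]
    rw [pdy_mul' (f := fun q => (S.F q)^2) (g := C.qcore) dF2 dqc i]
    rw [hpdyF2 i]
  have hvd2ρ : S.vd2 C.rho p = S.eps * S.F p
      * (pdy C.rho 0 p * S.mup 0 p + pdy C.rho 1 p * S.mup 1 p) := by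
    simp [PFSurf.vd2, Fin.sum_univ_two]
  have hvd2qc : S.vd2 C.qcore p = S.eps * S.F p
      * (pdy C.qcore 0 p * S.mup 0 p + pdy C.qcore 1 p * S.mup 1 p) := by
    simp [PFSurf.vd2, Fin.sum_univ_two]
  have hvd2h1e : S.vd2 (S.hd1 C.phi) p = S.eps * S.F p
      * (pdy (S.hd1 C.phi) 0 p * S.mup 0 p + pdy (S.hd1 C.phi) 1 p * S.mup 1 p) := by
    simp [PFSurf.vd2, Fin.sum_univ_two]
  have hvd2vd2φe : S.vd2 (S.vd2 C.phi) p = S.eps * S.F p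
      * (pdy (S.vd2 C.phi) 0 p * S.mup 0 p + pdy (S.vd2 C.phi) 1 p * S.mup 1 p) := by
    simp only [PFSurf.vd2, Fin.sum_univ_two]
  have hvd2Q : S.vd2 C.Q p = (1/2) * S.eps * ((S.F p)^2 * C.qcore p * S.vd2 C.rho p
      + C.rho p * (S.F p)^2 * S.vd2 C.qcore p) := by
    rw [show S.vd2 C.Q p = S.eps * S.F p * (pdy C.Q 0 p * S.mup 0 p + pdy C.Q 1 p * S.mup 1 p)
        from by simp [PFSurf.vd2, Fin.sum_univ_two]]
    rw [hpdyQ 0, hpdyQ 1, hvd2ρ, hvd2qc]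
    linear_combination ((S.F p)^2 * C.rho p * C.qcore p
        * (S.mup 0 p * pdy S.F 0 p + S.mup 1 p * pdy S.F 1 p)) * hε2
      + ((S.F p)^2 * C.rho p * C.qcore p) * hmell
  -- Leibniz expansion of P
  have hpdyP : ∀ i, pdy C.P i p
      = (-(1/2)) * (pdy C.rho i p * ((S.F p)^2 * (S.vd2 C.phi p * C.qcore p))
          + C.rho p * (2 * S.F p * pdy S.F i p * (S.vd2 C.phi p * C.qcore p)
            + (S.F p)^2 * (pdy (S.vd2 C.phi) i p * C.qcore p + S.vd2 C.phi p * pdy C.qcore i p)))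
        + (1/2) * (2 * S.F p * pdy S.F i p * S.hd1 C.phi p
            + (S.F p)^2 * pdy (S.hd1 C.phi) i p) := by
    intro i
    have hfun : C.P = fun q => (-(1/2)) * (C.rho q * ((S.F q)^2 * (S.vd2 C.phi q * C.qcore q)))
        + (1/2) * ((S.F q)^2 * S.hd1 C.phi q) := by
      funext q; simp only [AnisoChange.P]; ring
    rw [hfun]
    rw [pdy_add' (f := fun q => (-(1/2)) * (C.rho q * ((S.F q)^2 * (S.vd2 C.phi q * C.qcore q))))
        (g := fun q => (1/2) * ((S.F q)^2 * S.hd1 C.phi q))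
        ((dρ.mul (dF2.mul (dvd2φ.mul dqc))).const_mul (-(1/2)))
        ((dF2.mul dh1).const_mul (1/2)) i]
    rw [pdy_const_mul' (f := fun q => C.rho q * ((S.F q)^2 * (S.vd2 C.phi q * C.qcore q))) (dρ.mul (dF2.mul (dvd2φ.mul dqc))) (-(1/2)) i]
    rw [pdy_const_mul' (f := fun q => (S.F q)^2 * S.hd1 C.phi q) (dF2.mul dh1) (1/2) i]
    rw [pdy_mul' (f := C.rho) (g := fun q => (S.F q)^2 * (S.vd2 C.phi q * C.qcore q))
        dρ (dF2.mul (dvd2φ.mul dqc)) i]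
    rw [pdy_mul' (f := fun q => (S.F q)^2) (g := fun q => S.vd2 C.phi q * C.qcore q)
        dF2 (dvd2φ.mul dqc) i]
    rw [pdy_mul' (f := S.vd2 C.phi) (g := C.qcore) dvd2φ dqc i]
    rw [pdy_mul' (f := fun q => (S.F q)^2) (g := S.hd1 C.phi) dF2 dh1 i]
    rw [hpdyF2 i]
  have hvd2P : S.vd2 C.P p = -(1/2) * ((S.F p)^2 * S.vd2 C.phi p * C.qcore p * S.vd2 C.rho p
      + C.rho p * (S.F p)^2 * C.qcore p * S.vd2 (S.vd2 C.phi) p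
      + C.rho p * (S.F p)^2 * S.vd2 C.phi p * S.vd2 C.qcore p)
      + (1/2) * (S.F p)^2 * S.vd2 (S.hd1 C.phi) p := by
    rw [show S.vd2 C.P p = S.eps * S.F p * (pdy C.P 0 p * S.mup 0 p + pdy C.P 1 p * S.mup 1 p)
        from by simp [PFSurf.vd2, Fin.sum_univ_two]]
    rw [hpdyP 0, hpdyP 1, hvd2ρ, hvd2qc, hvd2vd2φe, hvd2h1e]
    linear_combination (S.eps * (S.F p)^2
      * (S.hd1 C.phi p - C.rho p * S.vd2 C.phi p * C.qcore p)) * hmell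
  -- final assembly
  have hQval : C.Q p = (1/2) * S.eps * C.rho p * (S.F p)^2 * C.qcore p := rfl
  have hPval : C.P p = -(1/2) * C.rho p * (S.F p)^2 * S.vd2 C.phi p * C.qcore p
      + (1/2) * (S.F p)^2 * S.hd1 C.phi p := rfl
  have hqcval : C.qcore p = S.vd2 C.phi p * S.hd1 C.phi p
      + S.vd2 (S.hd1 C.phi) p - 2 * S.hd2 C.phi p := rfl
  have hsigval : C.sigma p = S.vd2 (S.vd2 C.phi) p
      + S.eps * S.Iscal p * S.vd2 C.phi p + 2 * (S.vd2 C.phi p)^2 := rfl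
  rw [hvd2P, hvd2Q]
  linear_combination (-(1/2) * (S.F p)^2 * C.qcore p) * hρD
    + ((1/2) * C.rho p * (S.F p)^2 * C.qcore p) * hsigval
    - ((1/2) * (S.F p)^2) * hqcval
    + ((1/2) * S.vd2 C.phi p * ((S.F p)^2 * C.qcore p * S.vd2 C.rho p
        + C.rho p * (S.F p)^2 * S.vd2 C.qcore p)) * hε2
    + (S.vd2 C.phi p) * hPval
    - (S.Iscal p * S.vd2 C.phi p + 1) * hQval
end
end

section
/- Let the conic pseudo-Finsler surface (M,F) be anisotropically conformally related to (M,F̄) via F̄ = e^{φ}F. If F is Riemannian (I = 0), and if P + ε P_{;2;2} = 0 and Q + ε Q_{;2;2} = 0, then F̄ is Berwaldian. -/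
/-!
Common framework: conic pseudo-Finsler surfaces on an open conic subset
`A ⊆ M × (ℝ² ∖ {0})`, with modified Berwald frame, scalar derivatives,
and anisotropic conformal change `F̄ = e^φ F`.
-/

noncomputable section

open Real

/-! ### Analysis toolkit for `pdx`/`pdy` -/

namespace S4Tool

/-- smooth on A -/
def SmOn (A : Set Pt) (f : Pt → ℝ) : Prop := ContDiffOn ℝ (⊤ : ℕ∞) f A

variable {A : Set Pt} {f g : Pt → ℝ} {p : Pt} {i j k : Fin 2}

theorem smOn_diffAt (hA : IsOpen A) (hf : SmOn A f) (hp : p ∈ A) :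
    DifferentiableAt ℝ f p :=
  (hf.contDiffAt (hA.mem_nhds hp)).differentiableAt (by simp)

theorem smOn_pdy (hA : IsOpen A) (hf : SmOn A f) (i : Fin 2) : SmOn A (pdy f i) :=
  (hf.fderiv_of_isOpen hA (by simp)).clm_apply contDiffOn_const

theorem smOn_pdx (hA : IsOpen A) (hf : SmOn A f) (i : Fin 2) : SmOn A (pdx f i) :=
  (hf.fderiv_of_isOpen hA (by simp)).clm_apply contDiffOn_const

theorem smOn_const (c : ℝ) : SmOn A (fun _ => c) := contDiffOn_const
theorem smOn_mul (hf : SmOn A f) (hg : SmOn A g) : SmOn A (fun p => f p * g p) := hf.mul hg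
theorem smOn_div (hf : SmOn A f) (hg : SmOn A g) (hne : ∀ p ∈ A, g p ≠ 0) :
    SmOn A (fun p => f p / g p) := hf.div hg hne
theorem smOn_sum {F : Fin 2 → Pt → ℝ} (hF : ∀ i, SmOn A (F i)) :
    SmOn A (fun p => ∑ i, F i p) := by
  have h : (fun p => ∑ i, F i p) = (fun p => F 0 p + F 1 p) := by
    funext p; rw [Fin.sum_univ_two]
  rw [h]; exact (hF 0).add (hF 1)
theorem smOn_coordy (k : Fin 2) : SmOn A (fun p : Pt => p.2 k) :=
  ((contDiff_pi.mp contDiff_snd) k).contDiffOn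
theorem smOn_sq (hf : SmOn A f) : SmOn A (fun p => (f p)^2) := by
  have h := hf.mul hf; simpa [SmOn, pow_two] using h

/-- locality -/
theorem pdy_congrOn (hA : IsOpen A) (h : ∀ q ∈ A, f q = g q) (hp : p ∈ A) :
    pdy f i p = pdy g i p := by
  have he : f =ᶠ[nhds p] g := Filter.eventually_of_mem (hA.mem_nhds hp) h
  unfold pdy; rw [he.fderiv_eq]

theorem pdx_congrOn (hA : IsOpen A) (h : ∀ q ∈ A, f q = g q) (hp : p ∈ A) :
    pdx f i p = pdx g i p := by
  have he : f =ᶠ[nhds p] g := Filter.eventually_of_mem (hA.mem_nhds hp) h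
  unfold pdx; rw [he.fderiv_eq]

theorem pdy_const (c : ℝ) : pdy (fun _ => c) i p = 0 := by unfold pdy; simp

theorem pdy_zero_on (hA : IsOpen A) (h : ∀ q ∈ A, f q = 0) (hp : p ∈ A) :
    pdy f i p = 0 := by
  rw [pdy_congrOn (g := fun _ => (0:ℝ)) hA h hp]; exact pdy_const 0

theorem pdx_zero_on (hA : IsOpen A) (h : ∀ q ∈ A, f q = 0) (hp : p ∈ A) :
    pdx f i p = 0 := by
  rw [pdx_congrOn (g := fun _ => (0:ℝ)) hA h hp]; unfold pdx; simp

theorem pdy_add (hf : DifferentiableAt ℝ f p) (hg : DifferentiableAt ℝ g p) :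
    pdy (fun q => f q + g q) i p = pdy f i p + pdy g i p := by
  unfold pdy; rw [fderiv_fun_add hf hg]; simp

theorem pdy_sub (hf : DifferentiableAt ℝ f p) (hg : DifferentiableAt ℝ g p) :
    pdy (fun q => f q - g q) i p = pdy f i p - pdy g i p := by
  unfold pdy; rw [fderiv_fun_sub hf hg]; simp

theorem pdy_mul (hf : DifferentiableAt ℝ f p) (hg : DifferentiableAt ℝ g p) :
    pdy (fun q => f q * g q) i p = f p * pdy g i p + g p * pdy f i p := by
  unfold pdy; rw [fderiv_fun_mul hf hg]; simp [mul_comm]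

theorem pdy_const_mul (c : ℝ) (hf : DifferentiableAt ℝ f p) :
    pdy (fun q => c * f q) i p = c * pdy f i p := by
  unfold pdy; rw [fderiv_const_mul hf]; simp

theorem pdy_inv (hg : DifferentiableAt ℝ g p) (hne : g p ≠ 0) :
    pdy (fun q => (g q)⁻¹) i p = -(pdy g i p) / (g p)^2 := by
  have hi := (hasDerivAt_inv hne).hasFDerivAt
  have hc : HasFDerivAt (fun q => (g q)⁻¹)
      ((ContinuousLinearMap.smulRight 1 (-(g p ^ 2)⁻¹)).comp (fderiv ℝ g p)) p :=
    hi.comp p hg.hasFDerivAt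
  unfold pdy
  rw [hc.fderiv]
  simp [div_eq_mul_inv, mul_comm]

theorem pdy_div (hf : DifferentiableAt ℝ f p) (hg : DifferentiableAt ℝ g p) (hne : g p ≠ 0) :
    pdy (fun q => f q / g q) i p
      = (pdy f i p * g p - f p * pdy g i p) / (g p)^2 := by
  have h1 : (fun q => f q / g q) = fun q => f q * (g q)⁻¹ := by
    funext q; rw [div_eq_mul_inv]
  rw [h1, pdy_mul (g := fun q => (g q)⁻¹) hf (hg.inv hne), pdy_inv hg hne]
  field_simp
  ring

theorem pdy_sum {F : Fin 2 → Pt → ℝ} (hF : ∀ j, DifferentiableAt ℝ (F j) p) :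
    pdy (fun q => ∑ j, F j q) i p = ∑ j, pdy (F j) i p := by
  have h : (fun q => ∑ j, F j q) = (fun q => F 0 q + F 1 q) := by
    funext q; rw [Fin.sum_univ_two]
  rw [h, pdy_add (hF 0) (hF 1), Fin.sum_univ_two]

theorem pdy_coordy (k : Fin 2) :
    pdy (fun q : Pt => q.2 k) i p = if k = i then (1:ℝ) else 0 := by
  unfold pdy
  have h : (fun q : Pt => q.2 k)
      = fun q : Pt => ((ContinuousLinearMap.proj k).comp
          ((ContinuousLinearMap.snd ℝ (Fin 2 → ℝ) (Fin 2 → ℝ)))) q := rfl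
  rw [h, ContinuousLinearMap.fderiv]
  simp [Pi.single_apply]

theorem pdx_coordy (k : Fin 2) : pdx (fun q : Pt => q.2 k) i p = 0 := by
  unfold pdx
  have h : (fun q : Pt => q.2 k)
      = fun q : Pt => ((ContinuousLinearMap.proj k).comp
          ((ContinuousLinearMap.snd ℝ (Fin 2 → ℝ) (Fin 2 → ℝ)))) q := rfl
  rw [h, ContinuousLinearMap.fderiv]
  rfl

/-- symmetry of second derivatives, nested-directional form -/
theorem pd2_symm (hA : IsOpen A) (hf : SmOn A f) (hp : p ∈ A) (v w : Pt) :
    fderiv ℝ (fun q => fderiv ℝ f q w) p v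
      = fderiv ℝ (fun q => fderiv ℝ f q v) p w := by
  have hct : ContDiffAt ℝ (⊤ : ℕ∞) f p := hf.contDiffAt (hA.mem_nhds hp)
  have hsym : IsSymmSndFDerivAt ℝ f p := by
    apply hct.isSymmSndFDerivAt
    rw [minSmoothness_of_isRCLikeNormedField]
    exact WithTop.coe_le_coe.mpr le_top
  have hd1 : DifferentiableAt ℝ (fderiv ℝ f) p := by
    have h2 := hct.fderiv_right (m := 1) (by exact WithTop.coe_le_coe.mpr le_top)
    exact h2.differentiableAt one_ne_zero
  have key : ∀ u : Pt, fderiv ℝ (fun q => fderiv ℝ f q u) p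
      = (fderiv ℝ (fderiv ℝ f) p).flip u := by
    intro u
    have h3 := fderiv_clm_apply (c := fderiv ℝ f) (u := fun _ => u) hd1
      (differentiableAt_const u)
    rw [h3]
    have hz : fderiv ℝ (fun _ : Pt => u) p = 0 := fderiv_const_apply u
    rw [hz]
    simp
  rw [key w, key v]
  simpa using hsym v w

theorem pdy_pdy_comm (hA : IsOpen A) (hf : SmOn A f) (hp : p ∈ A) :
    pdy (pdy f i) j p = pdy (pdy f j) i p :=
  pd2_symm hA hf hp ((0 : Fin 2 → ℝ), Pi.single j 1) ((0 : Fin 2 → ℝ), Pi.single i 1)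

theorem pdy_pdx_comm (hA : IsOpen A) (hf : SmOn A f) (hp : p ∈ A) :
    pdy (pdx f i) j p = pdx (pdy f j) i p :=
  pd2_symm hA hf hp ((0 : Fin 2 → ℝ), Pi.single j 1) (Pi.single i 1, (0 : Fin 2 → ℝ))

theorem vd1_eq_fderiv (hd : DifferentiableAt ℝ f p) :
    vd1 f p = fderiv ℝ f p ((0 : Fin 2 → ℝ), p.2) := by
  have hdec : (((0 : Fin 2 → ℝ), p.2) : Pt)
      = p.2 0 • (((0 : Fin 2 → ℝ), Pi.single 0 1) : Pt)
        + p.2 1 • (((0 : Fin 2 → ℝ), Pi.single 1 1) : Pt) := by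
    apply Prod.ext
    · simp
    · funext k
      fin_cases k <;> simp
  rw [hdec, map_add, map_smul, map_smul]
  unfold vd1 pdy
  rw [Fin.sum_univ_two]
  simp [smul_eq_mul]

/-- Euler's relation for positively homogeneous functions -/
theorem euler_deg (d : ℕ) (hA : IsOpen A) (hf : SmOn A f) (hp : p ∈ A)
    (hom : ∀ t : ℝ, 0 < t → f ((p.1, t • p.2) : Pt) = t^d * f p) :
    vd1 f p = d * f p := by
  have hdf := smOn_diffAt hA hf hp
  have hc : HasDerivAt (fun t : ℝ => ((p.1, t • p.2) : Pt)) ((0 : Fin 2 → ℝ), p.2) 1 := by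
    have h2 : HasDerivAt (fun t : ℝ => t • p.2) ((1:ℝ) • p.2) 1 :=
      (hasDerivAt_id 1).smul_const p.2
    have h1 : HasDerivAt (fun _ : ℝ => p.1) (0 : Fin 2 → ℝ) 1 := hasDerivAt_const 1 p.1
    have h3 := h1.prodMk h2
    simpa using h3
  have hcurve : HasDerivAt (fun t : ℝ => f ((p.1, t • p.2) : Pt))
      (fderiv ℝ f p ((0 : Fin 2 → ℝ), p.2)) 1 := by
    have h0 : ((p.1, (1:ℝ) • p.2) : Pt) = p := by simp
    have hf' : HasFDerivAt f (fderiv ℝ f p) ((p.1, (1:ℝ) • p.2) : Pt) := by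
      rw [h0]; exact hdf.hasFDerivAt
    exact hf'.comp_hasDerivAt 1 hc
  have hpow : HasDerivAt (fun t : ℝ => t^d * f p) (d * f p) 1 := by
    have h4 := (hasDerivAt_pow d (1:ℝ)).mul_const (f p)
    simpa using h4
  have heq : (fun t : ℝ => f ((p.1, t • p.2) : Pt)) =ᶠ[nhds 1] fun t => t^d * f p := by
    have hmem : Set.Ioi (0:ℝ) ∈ nhds (1:ℝ) := isOpen_Ioi.mem_nhds (by norm_num)
    exact Filter.eventually_of_mem hmem fun t ht => hom t ht
  have huniq := (hpow.congr_of_eventuallyEq heq).unique hcurve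
  rw [vd1_eq_fderiv hdf, ← huniq]

/-- the cascade lemma: `∂_b(y·∂f) = ∂_b f + y·∂(∂_b f)` -/
theorem pdy_vd1 (hA : IsOpen A) (hf : SmOn A f) (hp : p ∈ A) (b : Fin 2) :
    pdy (vd1 f) b p = pdy f b p + vd1 (pdy f b) p := by
  have hdiff : ∀ j : Fin 2, DifferentiableAt ℝ (fun q : Pt => q.2 j * pdy f j q) p :=
    fun j => (smOn_diffAt hA (smOn_coordy j) hp).mul
      (smOn_diffAt hA (smOn_pdy hA hf j) hp)
  have h1 : pdy (vd1 f) b p = ∑ j, pdy (fun q : Pt => q.2 j * pdy f j q) b p := by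
    unfold vd1; exact pdy_sum hdiff
  rw [h1]
  have h2 : ∀ j, pdy (fun q : Pt => q.2 j * pdy f j q) b p
      = p.2 j * pdy (pdy f j) b p + pdy f j p * (if j = b then (1:ℝ) else 0) := by
    intro j
    rw [pdy_mul (smOn_diffAt hA (smOn_coordy j) hp) (smOn_diffAt hA (smOn_pdy hA hf j) hp)]
    rw [pdy_coordy]
  have h3 : ∀ j, pdy (pdy f j) b p = pdy (pdy f b) j p := fun j => pdy_pdy_comm hA hf hp
  unfold vd1
  rw [Fin.sum_univ_two, Fin.sum_univ_two, h2 0, h2 1, h3 0, h3 1]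
  fin_cases b <;> simp <;> ring

theorem pdx_vd1 (hA : IsOpen A) (hf : SmOn A f) (hp : p ∈ A) (i : Fin 2) :
    pdx (vd1 f) i p = vd1 (pdx f i) p := by
  have hdiff : ∀ j : Fin 2, DifferentiableAt ℝ (fun q : Pt => q.2 j * pdy f j q) p :=
    fun j => (smOn_diffAt hA (smOn_coordy j) hp).mul
      (smOn_diffAt hA (smOn_pdy hA hf j) hp)
  have h1 : pdx (vd1 f) i p = ∑ j, pdx (fun q : Pt => q.2 j * pdy f j q) i p := by
    unfold vd1
    have h : (fun q : Pt => ∑ j, q.2 j * pdy f j q)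
        = (fun q : Pt => q.2 0 * pdy f 0 q + q.2 1 * pdy f 1 q) := by
      funext q; rw [Fin.sum_univ_two]
    rw [h]
    unfold pdx
    rw [fderiv_fun_add (hdiff 0) (hdiff 1), Fin.sum_univ_two]
    simp [pdx]
  rw [h1]
  have h2 : ∀ j, pdx (fun q : Pt => q.2 j * pdy f j q) i p
      = p.2 j * pdx (pdy f j) i p := by
    intro j
    unfold pdx
    rw [fderiv_fun_mul (smOn_diffAt hA (smOn_coordy j) hp) (smOn_diffAt hA (smOn_pdy hA hf j) hp)]
    have h0 : pdx (fun q : Pt => q.2 j) i p = 0 := pdx_coordy j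
    unfold pdx at h0
    simp only [ContinuousLinearMap.add_apply, ContinuousLinearMap.coe_smul',
      Pi.smul_apply, smul_eq_mul]
    rw [h0]
    ring
  have h3 : ∀ j, pdx (pdy f j) i p = pdy (pdx f i) j p :=
    fun j => (pdy_pdx_comm hA hf hp).symm
  unfold vd1
  rw [Fin.sum_univ_two, Fin.sum_univ_two, h2 0, h2 1, h3 0, h3 1]

theorem vd1_congrOn (hA : IsOpen A) (h : ∀ q ∈ A, f q = g q) (hp : p ∈ A) :
    vd1 f p = vd1 g p := by
  unfold vd1
  congr 1
  funext j
  rw [pdy_congrOn hA h hp]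

theorem vd1_zero_on (hA : IsOpen A) (h : ∀ q ∈ A, f q = 0) (hp : p ∈ A) :
    vd1 f p = 0 := by
  unfold vd1
  have h2 : ∀ j : Fin 2, pdy f j p = 0 := fun j => pdy_zero_on hA h hp
  rw [Fin.sum_univ_two, h2 0, h2 1]; ring

/-- 2D linear algebra: if `u i * m j + m i * u j = 0` for all `i j` and `m ≠ 0`, then `u = 0`. -/
theorem utrick {m u : Fin 2 → ℝ} (hm : ∃ i, m i ≠ 0)
    (h : ∀ i j, u i * m j + m i * u j = 0) : ∀ i, u i = 0 := by
  obtain ⟨i0, hi0⟩ := hm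
  have h0 : u i0 = 0 := by
    have := h i0 i0
    have h2 : 2 * (u i0 * m i0) = 0 := by linarith [h i0 i0]
    have h3 : u i0 * m i0 = 0 := by linarith
    rcases mul_eq_zero.mp h3 with h | h
    · exact h
    · exact absurd h hi0
  intro j
  have := h i0 j
  rw [h0] at this
  simp at this
  rcases this with h | h
  · exact absurd h hi0
  · exact h

/-- 2D inversion: a nondegenerate symmetric 2×2 system with zero RHS has zero solution. -/
theorem lin2 {a b c d x y : ℝ} (hdet : a * d - b * c ≠ 0)
    (h1 : a * x + b * y = 0) (h2 : c * x + d * y = 0) : x = 0 ∧ y = 0 := by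
  constructor
  · have h3 : (a * d - b * c) * x = d * (a * x + b * y) - b * (c * x + d * y) := by ring
    rw [h1, h2] at h3
    simp at h3
    rcases h3 with h | h
    · exact absurd h hdet
    · exact h
  · have h3 : (a * d - b * c) * y = a * (c * x + d * y) - c * (a * x + b * y) := by ring
    rw [h1, h2] at h3
    simp at h3
    rcases h3 with h | h
    · exact absurd h hdet
    · exact h

/-- two covectors annihilating the same nonzero vector in 2D are proportional -/
theorem cross2 {v m y : Fin 2 → ℝ} (hv : v 0 * y 0 + v 1 * y 1 = 0)
    (hm : m 0 * y 0 + m 1 * y 1 = 0) (hy : ¬(y 0 = 0 ∧ y 1 = 0)) :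
    v 0 * m 1 = v 1 * m 0 := by
  by_cases h0 : y 0 = 0
  · have h1 : y 1 ≠ 0 := fun h => hy ⟨h0, h⟩
    rw [h0] at hv hm
    simp at hv hm
    rcases hv with h | h
    · rcases hm with h' | h'
      · rw [h, h']; ring
      · exact absurd h' h1
    · exact absurd h h1
  · have hv0 : v 0 = -(v 1 * y 1) / y 0 := by field_simp; linarith
    have hm0 : m 0 = -(m 1 * y 1) / y 0 := by field_simp; linarith
    rw [hv0, hm0]
    field_simp

end S4Tool


namespace S4Tool

variable {A : Set Pt} {f g : Pt → ℝ} {p : Pt} {i j k : Fin 2}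

theorem vd1_add (hf : DifferentiableAt ℝ f p) (hg : DifferentiableAt ℝ g p) :
    vd1 (fun q => f q + g q) p = vd1 f p + vd1 g p := by
  unfold vd1
  have h : ∀ j : Fin 2, pdy (fun q => f q + g q) j p = pdy f j p + pdy g j p :=
    fun j => pdy_add hf hg
  rw [Fin.sum_univ_two, Fin.sum_univ_two, Fin.sum_univ_two, h 0, h 1]; ring

theorem vd1_sub (hf : DifferentiableAt ℝ f p) (hg : DifferentiableAt ℝ g p) :
    vd1 (fun q => f q - g q) p = vd1 f p - vd1 g p := by
  unfold vd1
  have h : ∀ j : Fin 2, pdy (fun q => f q - g q) j p = pdy f j p - pdy g j p :=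
    fun j => pdy_sub hf hg
  rw [Fin.sum_univ_two, Fin.sum_univ_two, Fin.sum_univ_two, h 0, h 1]; ring

theorem vd1_mul (hf : DifferentiableAt ℝ f p) (hg : DifferentiableAt ℝ g p) :
    vd1 (fun q => f q * g q) p = f p * vd1 g p + g p * vd1 f p := by
  unfold vd1
  have h : ∀ j : Fin 2, pdy (fun q => f q * g q) j p
      = f p * pdy g j p + g p * pdy f j p := fun j => pdy_mul hf hg
  rw [Fin.sum_univ_two, Fin.sum_univ_two, Fin.sum_univ_two, h 0, h 1]; ring

theorem vd1_const_mul (c : ℝ) (hf : DifferentiableAt ℝ f p) :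
    vd1 (fun q => c * f q) p = c * vd1 f p := by
  unfold vd1
  have h : ∀ j : Fin 2, pdy (fun q => c * f q) j p = c * pdy f j p :=
    fun j => pdy_const_mul c hf
  rw [Fin.sum_univ_two, Fin.sum_univ_two, h 0, h 1]; ring

theorem vd1_div (hf : DifferentiableAt ℝ f p) (hg : DifferentiableAt ℝ g p)
    (hne : g p ≠ 0) :
    vd1 (fun q => f q / g q) p = (vd1 f p * g p - f p * vd1 g p) / (g p)^2 := by
  unfold vd1
  have h : ∀ j : Fin 2, pdy (fun q => f q / g q) j p
      = (pdy f j p * g p - f p * pdy g j p) / (g p)^2 := fun j => pdy_div hf hg hne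
  rw [Fin.sum_univ_two, Fin.sum_univ_two, Fin.sum_univ_two, h 0, h 1]
  field_simp
  ring

theorem vd1_sum {F : Fin 2 → Pt → ℝ} (hF : ∀ j, DifferentiableAt ℝ (F j) p) :
    vd1 (fun q => ∑ j, F j q) p = ∑ j, vd1 (F j) p := by
  have h : ∀ j : Fin 2, pdy (fun q => ∑ l, F l q) j p = ∑ l, pdy (F l) j p :=
    fun j => pdy_sum hF
  have lhs : vd1 (fun q => ∑ l, F l q) p
      = p.2 0 * (pdy (F 0) 0 p + pdy (F 1) 0 p)
        + p.2 1 * (pdy (F 0) 1 p + pdy (F 1) 1 p) := by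
    unfold vd1
    rw [Fin.sum_univ_two, h 0, h 1, Fin.sum_univ_two, Fin.sum_univ_two]
  rw [lhs, Fin.sum_univ_two]
  unfold vd1
  rw [Fin.sum_univ_two, Fin.sum_univ_two]
  ring

theorem vd1_coordy (k : Fin 2) : vd1 (fun q : Pt => q.2 k) p = p.2 k := by
  unfold vd1
  have h : ∀ j : Fin 2, pdy (fun q : Pt => q.2 k) j p = if k = j then (1:ℝ) else 0 :=
    fun j => pdy_coordy k
  rw [Fin.sum_univ_two, h 0, h 1]
  fin_cases k <;> simp

end S4Tool

/-! ### Frame lemmas for a pseudo-Finsler surface -/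

namespace S4Frame

open S4Tool

/-- `F²` as a function -/
def F2 (S : PFSurf) : Pt → ℝ := fun q => (S.F q)^2

/-- the metric tensor `g_{ij}` -/
def gm (S : PFSurf) (i j : Fin 2) : Pt → ℝ := fun p => (1/2) * pdy (pdy (F2 S) j) i p

variable {S : PFSurf} {p : Pt} {i j k a b c : Fin 2}

theorem smF : SmOn S.A S.F := S.smF
theorem smF2 : SmOn S.A (F2 S) := smOn_sq S.smF
theorem smg : SmOn S.A (gm S i j) := by
  have h := smOn_pdy S.openA (smOn_pdy S.openA (smF2 (S := S)) j) i
  have h2 : SmOn S.A (fun p => (1/2 : ℝ) * pdy (pdy (F2 S) j) i p) :=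
    (smOn_const (1/2)).mul h
  exact h2

theorem epsne : S.eps ≠ 0 := by rcases S.epspm with h | h <;> rw [h] <;> norm_num
theorem epssq : S.eps * S.eps = 1 := by rcases S.epspm with h | h <;> rw [h] <;> norm_num

theorem pdyF2 (hp : p ∈ S.A) : pdy (F2 S) i p = 2 * S.F p * pdy S.F i p := by
  have h : ∀ q ∈ S.A, F2 S q = S.F q * S.F q := by
    intro q _; unfold F2; ring
  rw [pdy_congrOn S.openA h hp, pdy_mul (smOn_diffAt S.openA S.smF hp)
    (smOn_diffAt S.openA S.smF hp)]
  ring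

theorem vd1F (hp : p ∈ S.A) : vd1 S.F p = S.F p := by
  have h := euler_deg 1 S.openA S.smF hp (fun t ht => by
    rw [S.homF p hp t ht]; ring)
  simpa using h

theorem vd1F2 (hp : p ∈ S.A) : vd1 (F2 S) p = 2 * F2 S p := by
  have h := euler_deg 2 S.openA (smF2 (S := S)) hp (fun t ht => by
    unfold F2; rw [S.homF p hp t ht]; ring)
  simpa using h

theorem vd1Gs (hp : p ∈ S.A) : vd1 (S.Gs i) p = 2 * S.Gs i p := by
  have h := euler_deg 2 S.openA (S.smG i) hp (fun t ht => S.homG p hp t ht i)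
  simpa using h

theorem y_ne (hp : p ∈ S.A) : ¬(p.2 0 = 0 ∧ p.2 1 = 0) := by
  rintro ⟨h0, h1⟩
  have hy : p.2 = (0 : Fin 2 → ℝ) := by funext l; fin_cases l <;> assumption
  have h2 := S.homF p hp 2 (by norm_num)
  rw [hy] at h2
  simp at h2
  have h3 : (p.1, (0 : Fin 2 → ℝ)) = p := by
    rw [← hy]
  rw [h3] at h2
  have hFne := S.Fne p hp
  have h4 : S.F p = 0 := by linarith
  exact hFne h4

theorem mlow_y (hp : p ∈ S.A) : ∑ l, p.2 l * S.mlow l p = 0 := by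
  have h := S.ellm p hp
  have hF := S.Fne p hp
  rw [Fin.sum_univ_two] at h ⊢
  have key : p.2 0 * S.mlow 0 p + p.2 1 * S.mlow 1 p
      = S.F p * (p.2 0 / S.F p * S.mlow 0 p + p.2 1 / S.F p * S.mlow 1 p) := by
    field_simp
  rw [key, h, mul_zero]

theorem some_mlow_ne (hp : p ∈ S.A) : ∃ l, S.mlow l p ≠ 0 := by
  by_contra h
  push_neg at h
  have hmm := S.mm p hp
  rw [Fin.sum_univ_two, h 0, h 1] at hmm
  simp at hmm
  exact epsne hmm.symm

theorem g_symm (hp : p ∈ S.A) : gm S i j p = gm S j i p := by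
  unfold gm
  rw [pdy_pdy_comm S.openA (smF2 (S := S)) hp]

/-- `y·∂(∂_b f) = ∂_b(y·∂f) − ∂_b f`, specialized consequences -/
theorem vd1_pdy_eq (hf : SmOn S.A f) (hp : p ∈ S.A) (b : Fin 2) :
    vd1 (pdy f b) p = pdy (vd1 f) b p - pdy f b p := by
  have h := pdy_vd1 S.openA hf hp b
  linarith

theorem vd1_pdyF2 (hp : p ∈ S.A) : vd1 (pdy (F2 S) i) p = pdy (F2 S) i p := by
  rw [vd1_pdy_eq (smF2 (S := S)) hp i]
  have h : ∀ q ∈ S.A, vd1 (F2 S) q = 2 * F2 S q := fun q hq => vd1F2 hq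
  rw [pdy_congrOn S.openA h hp, pdy_const_mul 2 (smOn_diffAt S.openA (smF2 (S := S)) hp)]
  ring

theorem vd1_pdyF (hp : p ∈ S.A) : vd1 (pdy S.F i) p = 0 := by
  rw [vd1_pdy_eq S.smF hp i]
  have h : ∀ q ∈ S.A, vd1 S.F q = S.F q := fun q hq => vd1F hq
  rw [pdy_congrOn S.openA h hp]
  ring

theorem vd1_g (hp : p ∈ S.A) : vd1 (gm S i j) p = 0 := by
  have h1 : vd1 (gm S i j) p = (1/2) * vd1 (pdy (pdy (F2 S) j) i) p := by
    unfold gm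
    exact vd1_const_mul (1/2) (smOn_diffAt S.openA
      (smOn_pdy S.openA (smOn_pdy S.openA (smF2 (S := S)) j) i) hp)
  rw [h1, vd1_pdy_eq (smOn_pdy S.openA (smF2 (S := S)) j) hp i]
  have h : ∀ q ∈ S.A, vd1 (pdy (F2 S) j) q = pdy (F2 S) j q := fun q hq => vd1_pdyF2 hq
  rw [pdy_congrOn S.openA h hp]
  ring

theorem sum_g_y (hp : p ∈ S.A) :
    ∑ l, gm S i l p * p.2 l = S.F p * pdy S.F i p := by
  have h1 : vd1 (pdy (F2 S) i) p = pdy (F2 S) i p := vd1_pdyF2 hp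
  unfold vd1 at h1
  have h2 : ∀ l : Fin 2, pdy (pdy (F2 S) l) i p = pdy (pdy (F2 S) i) l p :=
    fun l => pdy_pdy_comm S.openA (smF2 (S := S)) hp
  have h3 : ∑ l, gm S i l p * p.2 l = (1/2) * ∑ l, p.2 l * pdy (pdy (F2 S) i) l p := by
    unfold gm
    rw [Fin.sum_univ_two, Fin.sum_univ_two, h2 0, h2 1]
    ring
  rw [h3, h1, pdyF2 hp]
  ring

theorem det_ne (hp : p ∈ S.A) :
    gm S 0 0 p * gm S 1 1 p - gm S 0 1 p * gm S 1 0 p ≠ 0 := by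
  have hnd := S.nondeg p hp
  have hsym : gm S 1 0 p = gm S 0 1 p := g_symm hp
  have he : gm S 0 0 p * gm S 1 1 p - gm S 0 1 p * gm S 1 0 p
      = gm S 0 0 p * gm S 1 1 p - (gm S 0 1 p)^2 := by
    rw [hsym]; ring
  rw [he]
  exact hnd

theorem ginv_cancel (hp : p ∈ S.A) {v : Fin 2 → ℝ}
    (h : ∀ i, ∑ l, gm S i l p * v l = 0) : ∀ l, v l = 0 := by
  have h0 := h 0
  have h1 := h 1
  rw [Fin.sum_univ_two] at h0 h1
  have := lin2 (det_ne hp) h0 h1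
  intro l
  fin_cases l
  · exact this.1
  · exact this.2

theorem vd1_mlow (hp : p ∈ S.A) : vd1 (S.mlow i) p = 0 := by
  -- differentiate the angular identity radially
  have key : ∀ a b : Fin 2, vd1 (S.mlow a) p * S.mlow b p
      + S.mlow a p * vd1 (S.mlow b) p = 0 := by
    intro a b
    have hang : ∀ q ∈ S.A, S.eps * (S.mlow a q * S.mlow b q)
        = gm S a b q - pdy S.F a q * pdy S.F b q := by
      intro q hq
      have h := S.angular q hq a b
      unfold gm F2
      linarith [h]
    have hdm : DifferentiableAt ℝ (fun q => S.mlow a q * S.mlow b q) p :=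
      (smOn_diffAt S.openA (S.smml a) hp).mul (smOn_diffAt S.openA (S.smml b) hp)
    have hL : vd1 (fun q => S.eps * (S.mlow a q * S.mlow b q)) p
        = S.eps * (S.mlow a p * vd1 (S.mlow b) p + S.mlow b p * vd1 (S.mlow a) p) := by
      rw [vd1_const_mul S.eps hdm, vd1_mul (smOn_diffAt S.openA (S.smml a) hp)
        (smOn_diffAt S.openA (S.smml b) hp)]
    have hR : vd1 (fun q => gm S a b q - pdy S.F a q * pdy S.F b q) p = 0 := by
      rw [vd1_sub (smOn_diffAt S.openA (smg (S := S)) hp)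
        ((smOn_diffAt S.openA (smOn_pdy S.openA S.smF a) hp).fun_mul
          (smOn_diffAt S.openA (smOn_pdy S.openA S.smF b) hp))]
      rw [vd1_g hp, vd1_mul (smOn_diffAt S.openA (smOn_pdy S.openA S.smF a) hp)
        (smOn_diffAt S.openA (smOn_pdy S.openA S.smF b) hp)]
      rw [vd1_pdyF hp, vd1_pdyF hp]
      ring
    have hc := vd1_congrOn S.openA hang hp
    rw [hL, hR] at hc
    have heq : S.mlow a p * vd1 (S.mlow b) p + S.mlow b p * vd1 (S.mlow a) p = 0 := by
      rcases S.epspm with h | h <;> rw [h] at hc <;> linarith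
    linarith [heq]
  exact utrick (some_mlow_ne hp) (fun a b => key a b) i

theorem vd1_mup (hp : p ∈ S.A) : vd1 (S.mup i) p = 0 := by
  have key : ∀ a : Fin 2, ∑ l, gm S a l p * vd1 (S.mup l) p = 0 := by
    intro a
    have hmr : ∀ q ∈ S.A, S.mlow a q = ∑ l, gm S a l q * S.mup l q := by
      intro q hq
      have h := S.mraise q hq a
      unfold gm F2
      rw [h]
    have hdiff : ∀ l : Fin 2, DifferentiableAt ℝ (fun q => gm S a l q * S.mup l q) p :=
      fun l => (smOn_diffAt S.openA (smg (S := S)) hp).mul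
        (smOn_diffAt S.openA (S.smmu l) hp)
    have hc := vd1_congrOn S.openA hmr hp
    rw [vd1_sum hdiff] at hc
    have he : ∀ l : Fin 2, vd1 (fun q => gm S a l q * S.mup l q) p
        = gm S a l p * vd1 (S.mup l) p := by
      intro l
      rw [vd1_mul (smOn_diffAt S.openA (smg (S := S)) hp)
        (smOn_diffAt S.openA (S.smmu l) hp), vd1_g hp]
      ring
    rw [Fin.sum_univ_two, he 0, he 1] at hc
    rw [vd1_mlow hp] at hc
    rw [Fin.sum_univ_two]
    linarith
  exact ginv_cancel hp key i

theorem vd1_ellUp (hp : p ∈ S.A) : vd1 (S.ellUp i) p = 0 := by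
  have h : vd1 (S.ellUp i) p
      = (vd1 (fun q : Pt => q.2 i) p * S.F p - p.2 i * vd1 S.F p) / (S.F p)^2 := by
    unfold PFSurf.ellUp
    exact vd1_div (smOn_diffAt S.openA (smOn_coordy i) hp)
      (smOn_diffAt S.openA S.smF hp) (S.Fne p hp)
  rw [h, vd1_coordy, vd1F hp]
  ring

theorem pdy_ellUp (hp : p ∈ S.A) :
    pdy (S.ellUp i) k p
      = ((if i = k then (1:ℝ) else 0) * S.F p - p.2 i * pdy S.F k p) / (S.F p)^2 := by
  have h : pdy (S.ellUp i) k p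
      = (pdy (fun q : Pt => q.2 i) k p * S.F p - p.2 i * pdy S.F k p) / (S.F p)^2 := by
    unfold PFSurf.ellUp
    exact pdy_div (smOn_diffAt S.openA (smOn_coordy i) hp)
      (smOn_diffAt S.openA S.smF hp) (S.Fne p hp)
  rw [h, pdy_coordy]

end S4Frame


/-! ### Riemannian consequences of `I = 0` -/

namespace S4Riem

open S4Tool S4Frame

variable {S : PFSurf} {p : Pt} {i j k a b c : Fin 2}

theorem d3F2 (hI : ∀ q ∈ S.A, S.Iscal q = 0) (hp : p ∈ S.A) :
    pdy (pdy (pdy (F2 S) k) j) i p = 0 := by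
  have h := S.cartan p hp i j k
  rw [hI p hp] at h
  have hF := S.Fne p hp
  unfold F2
  have h2 : S.F p * ((1/4) * pdy (pdy (pdy (fun q => (S.F q)^2) k) j) i p) = 0 := by
    rw [h]; ring
  rcases mul_eq_zero.mp h2 with h3 | h3
  · exact absurd h3 hF
  · linarith

theorem pdy_g (hI : ∀ q ∈ S.A, S.Iscal q = 0) (hp : p ∈ S.A) :
    pdy (gm S i j) a p = 0 := by
  have hd : DifferentiableAt ℝ (pdy (pdy (F2 S) j) i) p :=
    smOn_diffAt S.openA (smOn_pdy S.openA (smOn_pdy S.openA (smF2 (S := S)) j) i) hp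
  have h1 : pdy (gm S i j) a p = (1/2) * pdy (pdy (pdy (F2 S) j) i) a p := by
    unfold gm
    exact pdy_const_mul (1/2) hd
  rw [h1, d3F2 hI hp]
  ring

theorem pdy_pdyF (hp : p ∈ S.A) :
    pdy (pdy S.F j) i p = S.eps * S.mlow i p * S.mlow j p / S.F p := by
  have hF := S.Fne p hp
  have hexp : pdy (pdy (F2 S) j) i p
      = 2 * (pdy S.F i p * pdy S.F j p + S.F p * pdy (pdy S.F j) i p) := by
    have h : ∀ q ∈ S.A, pdy (F2 S) j q = 2 * (S.F q * pdy S.F j q) := by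
      intro q hq; rw [pdyF2 hq]; ring
    rw [pdy_congrOn S.openA h hp,
      pdy_const_mul 2 ((smOn_diffAt S.openA S.smF hp).fun_mul
        (smOn_diffAt S.openA (smOn_pdy S.openA S.smF j) hp)),
      pdy_mul (smOn_diffAt S.openA S.smF hp)
        (smOn_diffAt S.openA (smOn_pdy S.openA S.smF j) hp)]
    ring
  have hang := S.angular p hp i j
  have h2 : S.F p * pdy (pdy S.F j) i p = S.eps * S.mlow i p * S.mlow j p := by
    have : (1/2) * pdy (pdy (fun q => (S.F q)^2) j) i p
        = (1/2) * pdy (pdy (F2 S) j) i p := rfl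
    rw [this] at hang
    rw [hexp] at hang
    linarith
  field_simp
  linarith [h2]

theorem pdy_mlow (hI : ∀ q ∈ S.A, S.Iscal q = 0) (hp : p ∈ S.A) :
    pdy (S.mlow i) k p = -(pdy S.F i p * S.mlow k p) / S.F p := by
  have hF := S.Fne p hp
  have key : ∀ a b : Fin 2,
      (pdy (S.mlow a) k p + pdy S.F a p * S.mlow k p / S.F p) * S.mlow b p
      + S.mlow a p * (pdy (S.mlow b) k p + pdy S.F b p * S.mlow k p / S.F p) = 0 := by
    intro a b
    have hang : ∀ q ∈ S.A, S.eps * (S.mlow a q * S.mlow b q)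
        = gm S a b q - pdy S.F a q * pdy S.F b q := by
      intro q hq
      have h := S.angular q hq a b
      unfold gm F2
      linarith [h]
    have hc := pdy_congrOn (i := k) S.openA hang hp
    have hL : pdy (fun q => S.eps * (S.mlow a q * S.mlow b q)) k p
        = S.eps * (S.mlow a p * pdy (S.mlow b) k p + S.mlow b p * pdy (S.mlow a) k p) := by
      rw [pdy_const_mul S.eps ((smOn_diffAt S.openA (S.smml a) hp).fun_mul
        (smOn_diffAt S.openA (S.smml b) hp)),
        pdy_mul (smOn_diffAt S.openA (S.smml a) hp) (smOn_diffAt S.openA (S.smml b) hp)]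
    have hR : pdy (fun q => gm S a b q - pdy S.F a q * pdy S.F b q) k p
        = - (S.eps * S.mlow a p * S.mlow k p / S.F p * pdy S.F b p
            + pdy S.F a p * (S.eps * S.mlow b p * S.mlow k p / S.F p)) := by
      rw [pdy_sub (smOn_diffAt S.openA (smg (S := S)) hp)
        ((smOn_diffAt S.openA (smOn_pdy S.openA S.smF a) hp).fun_mul
          (smOn_diffAt S.openA (smOn_pdy S.openA S.smF b) hp)),
        pdy_g hI hp,
        pdy_mul (smOn_diffAt S.openA (smOn_pdy S.openA S.smF a) hp)
          (smOn_diffAt S.openA (smOn_pdy S.openA S.smF b) hp),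
        pdy_pdyF hp, pdy_pdyF hp]
      ring
    rw [hL, hR] at hc
    -- cancel the factor ε
    have heps := epssq (S := S)
    have hc2 : S.eps * ((pdy (S.mlow a) k p + pdy S.F a p * S.mlow k p / S.F p) * S.mlow b p
        + S.mlow a p * (pdy (S.mlow b) k p + pdy S.F b p * S.mlow k p / S.F p)) = 0 := by
      field_simp at hc ⊢
      nlinarith [hc]
    rcases mul_eq_zero.mp hc2 with h3 | h3
    · exact absurd h3 (epsne (S := S))
    · exact h3
  have := utrick (some_mlow_ne hp)
    (fun a b => key a b) i
  field_simp at this ⊢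
  linarith

theorem pdy_mup (hI : ∀ q ∈ S.A, S.Iscal q = 0) (hp : p ∈ S.A) :
    pdy (S.mup i) k p = -(p.2 i * S.mlow k p) / (S.F p)^2 := by
  have hF := S.Fne p hp
  have key : ∀ a : Fin 2, ∑ l, gm S a l p
      * (pdy (S.mup l) k p + p.2 l * S.mlow k p / (S.F p)^2) = 0 := by
    intro a
    have hmr : ∀ q ∈ S.A, S.mlow a q = ∑ l, gm S a l q * S.mup l q := by
      intro q hq
      have h := S.mraise q hq a
      unfold gm F2
      rw [h]
    have hdiff : ∀ l : Fin 2, DifferentiableAt ℝ (fun q => gm S a l q * S.mup l q) p :=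
      fun l => (smOn_diffAt S.openA (smg (S := S)) hp).mul
        (smOn_diffAt S.openA (S.smmu l) hp)
    have hc := pdy_congrOn (i := k) S.openA hmr hp
    rw [pdy_sum hdiff] at hc
    have he : ∀ l : Fin 2, pdy (fun q => gm S a l q * S.mup l q) k p
        = gm S a l p * pdy (S.mup l) k p := by
      intro l
      rw [pdy_mul (smOn_diffAt S.openA (smg (S := S)) hp)
        (smOn_diffAt S.openA (S.smmu l) hp), pdy_g hI hp]
      ring
    rw [Fin.sum_univ_two, he 0, he 1] at hc
    rw [pdy_mlow hI hp] at hc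
    have hgy := sum_g_y (i := a) hp
    rw [Fin.sum_univ_two] at hgy ⊢
    field_simp at hc ⊢
    linear_combination (-(S.F p)) * hc + S.mlow k p * hgy
  have hv := ginv_cancel hp key i
  have hF2 : (S.F p)^2 ≠ 0 := pow_ne_zero 2 hF
  field_simp at hv ⊢
  linarith

end S4Riem


/-! ### vertical derivative `vd2` calculus -/

namespace S4V

open S4Tool S4Frame S4Riem

variable {S : PFSurf} {f g : Pt → ℝ} {p : Pt} {i j k c r : Fin 2}

theorem vd2_def (f : Pt → ℝ) (p : Pt) :
    S.vd2 f p = S.eps * S.F p * ∑ a, pdy f a p * S.mup a p := rfl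

theorem smOn_vd2 (hf : SmOn S.A f) : SmOn S.A (S.vd2 f) := by
  have h : SmOn S.A (fun p => S.eps * S.F p * ∑ a, pdy f a p * S.mup a p) := by
    apply smOn_mul
    · exact (smOn_const S.eps).mul S.smF
    · exact smOn_sum (fun a => (smOn_pdy S.openA hf a).mul (S.smmu a))
  exact h

theorem vd2_congrOn (h : ∀ q ∈ S.A, f q = g q) (hp : p ∈ S.A) :
    S.vd2 f p = S.vd2 g p := by
  rw [vd2_def, vd2_def]
  have h2 : ∀ a : Fin 2, pdy f a p = pdy g a p := fun a => pdy_congrOn S.openA h hp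
  rw [Fin.sum_univ_two, Fin.sum_univ_two, h2 0, h2 1]

theorem vd2_zero_on (h : ∀ q ∈ S.A, f q = 0) (hp : p ∈ S.A) : S.vd2 f p = 0 := by
  rw [vd2_congrOn (g := fun _ => (0:ℝ)) h hp, vd2_def]
  have h2 : ∀ a : Fin 2, pdy (fun _ : Pt => (0:ℝ)) a p = 0 := fun a => pdy_const 0
  rw [Fin.sum_univ_two, h2 0, h2 1]
  ring

theorem vd2_add (hf : DifferentiableAt ℝ f p) (hg : DifferentiableAt ℝ g p) :
    S.vd2 (fun q => f q + g q) p = S.vd2 f p + S.vd2 g p := by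
  rw [vd2_def, vd2_def, vd2_def]
  have h2 : ∀ a : Fin 2, pdy (fun q => f q + g q) a p = pdy f a p + pdy g a p :=
    fun a => pdy_add hf hg
  rw [Fin.sum_univ_two, Fin.sum_univ_two, Fin.sum_univ_two, h2 0, h2 1]
  ring

theorem vd2_sub (hf : DifferentiableAt ℝ f p) (hg : DifferentiableAt ℝ g p) :
    S.vd2 (fun q => f q - g q) p = S.vd2 f p - S.vd2 g p := by
  rw [vd2_def, vd2_def, vd2_def]
  have h2 : ∀ a : Fin 2, pdy (fun q => f q - g q) a p = pdy f a p - pdy g a p :=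
    fun a => pdy_sub hf hg
  rw [Fin.sum_univ_two, Fin.sum_univ_two, Fin.sum_univ_two, h2 0, h2 1]
  ring

theorem vd2_mul (hf : DifferentiableAt ℝ f p) (hg : DifferentiableAt ℝ g p) :
    S.vd2 (fun q => f q * g q) p = f p * S.vd2 g p + g p * S.vd2 f p := by
  rw [vd2_def, vd2_def, vd2_def]
  have h2 : ∀ a : Fin 2, pdy (fun q => f q * g q) a p
      = f p * pdy g a p + g p * pdy f a p := fun a => pdy_mul hf hg
  rw [Fin.sum_univ_two, Fin.sum_univ_two, Fin.sum_univ_two, h2 0, h2 1]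
  ring

theorem vd2_const_mul (cc : ℝ) (hf : DifferentiableAt ℝ f p) :
    S.vd2 (fun q => cc * f q) p = cc * S.vd2 f p := by
  rw [vd2_def, vd2_def]
  have h2 : ∀ a : Fin 2, pdy (fun q => cc * f q) a p = cc * pdy f a p :=
    fun a => pdy_const_mul cc hf
  rw [Fin.sum_univ_two, Fin.sum_univ_two, h2 0, h2 1]
  ring

/-- `vd2 F = 0` -/
theorem vd2F (hp : p ∈ S.A) : S.vd2 S.F p = 0 := by
  rw [vd2_def]
  have h := S.mell p hp
  rw [Fin.sum_univ_two] at h ⊢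
  linear_combination (S.eps * S.F p) * h

/-- `vd1` and `vd2` commute -/
theorem vd1_vd2_comm (hf : SmOn S.A f) (hp : p ∈ S.A) :
    vd1 (S.vd2 f) p = S.vd2 (vd1 f) p := by
  have hSig : ∀ a : Fin 2, DifferentiableAt ℝ (fun q => pdy f a q * S.mup a q) p :=
    fun a => (smOn_diffAt S.openA (smOn_pdy S.openA hf a) hp).mul
      (smOn_diffAt S.openA (S.smmu a) hp)
  have h1 : vd1 (S.vd2 f) p
      = S.eps * (S.F p * vd1 (fun q => ∑ a, pdy f a q * S.mup a q) p
        + (∑ a, pdy f a p * S.mup a p) * vd1 S.F p) := by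
    have he : S.vd2 f = fun q => S.eps * (S.F q * ∑ a, pdy f a q * S.mup a q) := by
      funext q; rw [vd2_def]; ring
    rw [he, vd1_const_mul S.eps ((smOn_diffAt S.openA S.smF hp).fun_mul
      (smOn_diffAt S.openA (smOn_sum (fun a => (smOn_pdy S.openA hf a).mul (S.smmu a))) hp)),
      vd1_mul (smOn_diffAt S.openA S.smF hp)
        (smOn_diffAt S.openA (smOn_sum (fun a => (smOn_pdy S.openA hf a).mul (S.smmu a))) hp)]
  have h2 : vd1 (fun q => ∑ a, pdy f a q * S.mup a q) p
      = ∑ a, S.mup a p * (pdy (vd1 f) a p - pdy f a p) := by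
    rw [vd1_sum hSig]
    have h3 : ∀ a : Fin 2, vd1 (fun q => pdy f a q * S.mup a q) p
        = S.mup a p * (pdy (vd1 f) a p - pdy f a p) := by
      intro a
      rw [vd1_mul (smOn_diffAt S.openA (smOn_pdy S.openA hf a) hp)
        (smOn_diffAt S.openA (S.smmu a) hp), vd1_mup hp,
        vd1_pdy_eq hf hp a]
      ring
    rw [Fin.sum_univ_two, Fin.sum_univ_two, h3 0, h3 1]
  rw [h1, h2, vd1F hp, vd2_def]
  rw [Fin.sum_univ_two, Fin.sum_univ_two, Fin.sum_univ_two]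
  ring

/-- `vd2 m^i = -y^i/F` (Riemannian) -/
theorem vd2_mup (hI : ∀ q ∈ S.A, S.Iscal q = 0) (hp : p ∈ S.A) :
    S.vd2 (S.mup i) p = -(p.2 i) / S.F p := by
  have hF := S.Fne p hp
  rw [vd2_def]
  have h : ∀ a : Fin 2, pdy (S.mup i) a p = -(p.2 i * S.mlow a p) / (S.F p)^2 :=
    fun a => pdy_mup hI hp
  have hmm := S.mm p hp
  have heps := epssq (S := S)
  rw [Fin.sum_univ_two, h 0, h 1]
  rw [Fin.sum_univ_two] at hmm
  field_simp
  linear_combination (-(p.2 i * S.eps)) * hmm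
    + (-(p.2 i)) * heps

/-- `vd2 ℓ^i = ε m^i` -/
theorem vd2_ellUp (hp : p ∈ S.A) : S.vd2 (S.ellUp i) p = S.eps * S.mup i p := by
  have hF := S.Fne p hp
  rw [vd2_def]
  have h : ∀ a : Fin 2, pdy (S.ellUp i) a p
      = ((if i = a then (1:ℝ) else 0) * S.F p - p.2 i * pdy S.F a p) / (S.F p)^2 :=
    fun a => pdy_ellUp hp
  have hmell := S.mell p hp
  rw [Fin.sum_univ_two, h 0, h 1]
  rw [Fin.sum_univ_two] at hmell
  fin_cases i
  · simp only [Fin.isValue]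
    field_simp
    norm_num
    linear_combination (-(S.eps * p.2 0)) * hmell
  · simp only [Fin.isValue]
    field_simp
    norm_num
    linear_combination (-(S.eps * p.2 1)) * hmell

end S4V


/-! ### master lemma: third vertical derivative of a 2-homogeneous scalar -/

namespace S4M

open S4Tool S4Frame S4Riem S4V

/-- `Σ = ∂_a u · m^a` -/
def Sg (S : PFSurf) (u : Pt → ℝ) : Pt → ℝ := fun q => ∑ a, pdy u a q * S.mup a q

/-- `∂_c∂_a u · m^a` -/
def inn (S : PFSurf) (u : Pt → ℝ) (cc : Fin 2) : Pt → ℝ :=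
  fun q => ∑ a, pdy (pdy u a) cc q * S.mup a q

/-- `S₂ = ∂∂u·m^m^` -/
def S2f (S : PFSurf) (u : Pt → ℝ) : Pt → ℝ := fun q => ∑ cc, inn S u cc q * S.mup cc q

/-- `∂_r∂_c∂_a u · m^a` -/
def innn (S : PFSurf) (u : Pt → ℝ) (cc r : Fin 2) : Pt → ℝ :=
  fun q => ∑ a, pdy (pdy (pdy u a) cc) r q * S.mup a q

/-- `T = ∂∂∂u·m^m^m^` -/
def Tf (S : PFSurf) (u : Pt → ℝ) : Pt → ℝ :=
  fun q => ∑ r, (∑ cc, innn S u cc r q * S.mup cc q) * S.mup r q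

variable {S : PFSurf} {u : Pt → ℝ} {p : Pt} {b c r : Fin 2}

theorem smOn_Sg (hu : SmOn S.A u) : SmOn S.A (Sg S u) :=
  smOn_sum (fun a => (smOn_pdy S.openA hu a).mul (S.smmu a))

theorem smOn_inn (hu : SmOn S.A u) (cc : Fin 2) : SmOn S.A (inn S u cc) :=
  smOn_sum (fun a => (smOn_pdy S.openA (smOn_pdy S.openA hu a) cc).mul (S.smmu a))

theorem smOn_S2f (hu : SmOn S.A u) : SmOn S.A (S2f S u) :=
  smOn_sum (fun cc => (smOn_inn hu cc).mul (S.smmu cc))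

/-- multiplied-out form of `pdy_mup` -/
theorem pdy_mup' (hI : ∀ q ∈ S.A, S.Iscal q = 0) (hp : p ∈ S.A) (i k : Fin 2) :
    (S.F p)^2 * pdy (S.mup i) k p = -(p.2 i * S.mlow k p) := by
  have hF := S.Fne p hp
  rw [pdy_mup hI hp]
  field_simp

/-- `y·∂(∂_b u) = ∂_b u` -/
theorem Ma (hu : SmOn S.A u) (hu1 : ∀ q ∈ S.A, vd1 u q = 2 * u q)
    (hp : p ∈ S.A) (b : Fin 2) : vd1 (pdy u b) p = pdy u b p := by
  rw [vd1_pdy_eq hu hp b, pdy_congrOn S.openA hu1 hp,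
    pdy_const_mul 2 (smOn_diffAt S.openA hu hp)]
  ring

/-- `y·∂(∂_c∂_b u) = 0` -/
theorem Mb (hu : SmOn S.A u) (hu1 : ∀ q ∈ S.A, vd1 u q = 2 * u q)
    (hp : p ∈ S.A) (b c : Fin 2) : vd1 (pdy (pdy u b) c) p = 0 := by
  rw [vd1_pdy_eq (smOn_pdy S.openA hu b) hp c,
    pdy_congrOn S.openA (fun q hq => Ma hu hu1 hq b) hp]
  ring

/-- covectors annihilating `y` are multiples of `m` -/
theorem ann (hp : p ∈ S.A) {v : Fin 2 → ℝ}
    (hv : p.2 0 * v 0 + p.2 1 * v 1 = 0) :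
    ∀ j, v j = S.eps * (S.mup 0 p * v 0 + S.mup 1 p * v 1) * S.mlow j p := by
  have hm := mlow_y hp
  rw [Fin.sum_univ_two] at hm
  have hy := y_ne hp
  have hcross : v 0 * S.mlow 1 p = v 1 * S.mlow 0 p := by
    apply cross2 (y := p.2) (m := fun l => S.mlow l p)
    · linear_combination hv
    · linear_combination hm
    · exact hy
  have hmm := S.mm p hp
  rw [Fin.sum_univ_two] at hmm
  have heps := epssq (S := S)
  have h0 : v 0 = S.eps * (S.mup 0 p * v 0 + S.mup 1 p * v 1) * S.mlow 0 p := by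
    linear_combination (S.eps * S.mup 1 p) * hcross + (-(S.eps * v 0)) * hmm
      + (-(v 0)) * heps
  have h1 : v 1 = S.eps * (S.mup 0 p * v 0 + S.mup 1 p * v 1) * S.mlow 1 p := by
    linear_combination (-(S.eps * S.mup 0 p)) * hcross + (-(S.eps * v 1)) * hmm
      + (-(v 1)) * heps
  intro j
  fin_cases j
  · exact h0
  · exact h1

/-- symmetry in the outer two slots -/
theorem symO (hu : SmOn S.A u) (hp : p ∈ S.A) (b c r : Fin 2) :
    pdy (pdy (pdy u b) c) r p = pdy (pdy (pdy u b) r) c p :=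
  pdy_pdy_comm S.openA (smOn_pdy S.openA hu b) hp

/-- symmetry in the inner two slots -/
theorem symI (hu : SmOn S.A u) (hp : p ∈ S.A) (b c r : Fin 2) :
    pdy (pdy (pdy u b) c) r p = pdy (pdy (pdy u c) b) r p := by
  apply pdy_congrOn S.openA (fun q hq => pdy_pdy_comm S.openA hu hq) hp

/-- contraction of the third derivative with `y` in the last slot -/
theorem hvan (hu : SmOn S.A u) (hu1 : ∀ q ∈ S.A, vd1 u q = 2 * u q)
    (hp : p ∈ S.A) (b c : Fin 2) :
    p.2 0 * pdy (pdy (pdy u b) c) 0 p + p.2 1 * pdy (pdy (pdy u b) c) 1 p = 0 := by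
  have h := Mb hu hu1 hp b c
  unfold vd1 at h
  rw [Fin.sum_univ_two] at h
  exact h

/-- the annihilation structure of the third derivative -/
theorem Mc (hu : SmOn S.A u) (hu1 : ∀ q ∈ S.A, vd1 u q = 2 * u q)
    (hp : p ∈ S.A) (b c r : Fin 2) :
    pdy (pdy (pdy u b) c) r p = S.eps * Tf S u p
      * S.mlow b p * S.mlow c p * S.mlow r p := by
  set D3 : Fin 2 → Fin 2 → Fin 2 → ℝ := fun b c r => pdy (pdy (pdy u b) c) r p with hD3
  set E2 : Fin 2 → Fin 2 → ℝ :=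
    fun b c => S.mup 0 p * D3 b c 0 + S.mup 1 p * D3 b c 1 with hE2
  set E1 : Fin 2 → ℝ := fun b => S.mup 0 p * E2 b 0 + S.mup 1 p * E2 b 1 with hE1
  have step1 : ∀ b c r, D3 b c r = S.eps * E2 b c * S.mlow r p := by
    intro b c r
    exact ann hp (hvan hu hu1 hp b c) r
  have hmid : ∀ b a, p.2 0 * D3 b 0 a + p.2 1 * D3 b 1 a = 0 := by
    intro b a
    have e0 : D3 b 0 a = pdy (pdy (pdy u b) a) 0 p := symO hu hp b 0 a
    have e1 : D3 b 1 a = pdy (pdy (pdy u b) a) 1 p := symO hu hp b 1 a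
    rw [e0, e1]
    exact hvan hu hu1 hp b a
  have hvan2 : ∀ b, p.2 0 * E2 b 0 + p.2 1 * E2 b 1 = 0 := by
    intro b
    rw [hE2]
    linear_combination (S.mup 0 p) * hmid b 0 + (S.mup 1 p) * hmid b 1
  have step2 : ∀ b c, E2 b c = S.eps * E1 b * S.mlow c p := by
    intro b c
    exact ann hp (hvan2 b) c
  have hfirst : ∀ c r, p.2 0 * D3 0 c r + p.2 1 * D3 1 c r = 0 := by
    intro c r
    have e : ∀ b : Fin 2, D3 b c r = pdy (pdy (pdy u c) r) b p := by
      intro b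
      rw [hD3]
      show pdy (pdy (pdy u b) c) r p = _
      rw [symI hu hp b c r, symO hu (u := u) hp c b r]
    rw [e 0, e 1]
    exact hvan hu hu1 hp c r
  have hvan3 : p.2 0 * E1 0 + p.2 1 * E1 1 = 0 := by
    have hmidb : ∀ c, p.2 0 * E2 0 c + p.2 1 * E2 1 c = 0 := by
      intro c
      rw [hE2]
      linear_combination (S.mup 0 p) * hfirst c 0 + (S.mup 1 p) * hfirst c 1
    rw [hE1]
    linear_combination (S.mup 0 p) * hmidb 0 + (S.mup 1 p) * hmidb 1
  have step3 : ∀ b, E1 b = S.eps * (S.mup 0 p * E1 0 + S.mup 1 p * E1 1) * S.mlow b p :=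
    ann hp hvan3
  have hT : Tf S u p = S.mup 0 p * E1 0 + S.mup 1 p * E1 1 := by
    unfold Tf innn
    rw [hE1, hE2, hD3]
    simp only [Fin.sum_univ_two]
    ring
  have heps := epssq (S := S)
  have hgoal : D3 b c r = S.eps * Tf S u p * S.mlow b p * S.mlow c p * S.mlow r p := by
    rw [step1 b c r, step2 b c, step3 b, hT]
    linear_combination (S.eps * (S.mup 0 p * E1 0 + S.mup 1 p * E1 1) * S.mlow b p
      * S.mlow c p * S.mlow r p) * heps
  exact hgoal

end S4M


namespace S4M

open S4Tool S4Frame S4Riem S4V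

variable {S : PFSurf} {u : Pt → ℝ} {p : Pt}

theorem hSgdef (hp : p ∈ S.A) :
    Sg S u p = pdy u 0 p * S.mup 0 p + pdy u 1 p * S.mup 1 p := by
  unfold Sg; rw [Fin.sum_univ_two]

theorem vd2_eq_Sg (hp : p ∈ S.A) : S.vd2 u p = S.eps * S.F p * Sg S u p := by
  rw [vd2_def]; rfl

/-- `F²·∂_c Σ = F²·(∂∂u·m^) − 2u·m_c` -/
theorem pdySg (hI : ∀ q ∈ S.A, S.Iscal q = 0) (hu : SmOn S.A u)
    (hu1 : ∀ q ∈ S.A, vd1 u q = 2 * u q) (hp : p ∈ S.A) (cc : Fin 2) :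
    (S.F p)^2 * pdy (Sg S u) cc p
      = (S.F p)^2 * inn S u cc p - 2 * u p * S.mlow cc p := by
  have hdiff : ∀ a : Fin 2, DifferentiableAt ℝ (fun q => pdy u a q * S.mup a q) p :=
    fun a => (smOn_diffAt S.openA (smOn_pdy S.openA hu a) hp).mul
      (smOn_diffAt S.openA (S.smmu a) hp)
  have h1 : pdy (Sg S u) cc p = ∑ a, pdy (fun q => pdy u a q * S.mup a q) cc p := by
    unfold Sg; exact pdy_sum hdiff
  have h2 : ∀ a : Fin 2, pdy (fun q => pdy u a q * S.mup a q) cc p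
      = pdy u a p * pdy (S.mup a) cc p + S.mup a p * pdy (pdy u a) cc p :=
    fun a => pdy_mul (smOn_diffAt S.openA (smOn_pdy S.openA hu a) hp)
      (smOn_diffAt S.openA (S.smmu a) hp)
  have hvd1 : p.2 0 * pdy u 0 p + p.2 1 * pdy u 1 p = 2 * u p := by
    have h := hu1 p hp; unfold vd1 at h; rw [Fin.sum_univ_two] at h; exact h
  rw [h1, Fin.sum_univ_two, h2 0, h2 1]
  unfold inn
  rw [Fin.sum_univ_two]
  linear_combination (pdy u 0 p) * (pdy_mup' hI hp 0 cc)
    + (pdy u 1 p) * (pdy_mup' hI hp 1 cc) + (-(S.mlow cc p)) * hvd1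

/-- second vertical derivative formula -/
theorem Md2 (hI : ∀ q ∈ S.A, S.Iscal q = 0) (hu : SmOn S.A u)
    (hu1 : ∀ q ∈ S.A, vd1 u q = 2 * u q) (hp : p ∈ S.A) :
    S.vd2 (S.vd2 u) p = (S.F p)^2 * S2f S u p - 2 * S.eps * u p := by
  have hF := S.Fne p hp
  have hSgsm : SmOn S.A (Sg S u) := smOn_Sg hu
  have hX : ∀ cc : Fin 2, pdy (S.vd2 u) cc p
      = S.eps * (S.F p * pdy (Sg S u) cc p + Sg S u p * pdy S.F cc p) := by
    intro cc
    have he : S.vd2 u = fun q => S.eps * (S.F q * Sg S u q) := by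
      funext q; rw [vd2_def]; unfold Sg; ring
    rw [he, pdy_const_mul S.eps ((smOn_diffAt S.openA S.smF hp).fun_mul
      (smOn_diffAt S.openA hSgsm hp)),
      pdy_mul (smOn_diffAt S.openA S.smF hp) (smOn_diffAt S.openA hSgsm hp)]
  have h0 := pdySg hI hu hu1 hp 0
  have h1 := pdySg hI hu hu1 hp 1
  have hmell := S.mell p hp
  rw [Fin.sum_univ_two] at hmell
  have hmm := S.mm p hp
  rw [Fin.sum_univ_two] at hmm
  have heps := epssq (S := S)
  have hinn0 : inn S u 0 p = pdy (pdy u 0) 0 p * S.mup 0 p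
      + pdy (pdy u 1) 0 p * S.mup 1 p := by unfold inn; rw [Fin.sum_univ_two]
  have hinn1 : inn S u 1 p = pdy (pdy u 0) 1 p * S.mup 0 p
      + pdy (pdy u 1) 1 p * S.mup 1 p := by unfold inn; rw [Fin.sum_univ_two]
  rw [vd2_def (f := S.vd2 u), Fin.sum_univ_two, hX 0, hX 1]
  unfold S2f inn
  simp only [Fin.sum_univ_two]
  linear_combination ((S.F p)^2 * (pdy (Sg S u) 0 p * S.mup 0 p
      + pdy (Sg S u) 1 p * S.mup 1 p)
      + S.F p * Sg S u p * (S.mup 0 p * pdy S.F 0 p + S.mup 1 p * pdy S.F 1 p)) * heps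
    + (S.mup 0 p) * h0 + (S.mup 1 p) * h1 + (-(2 * u p)) * hmm
    + (S.F p * Sg S u p) * hmell
    + ((S.F p)^2 * S.mup 0 p) * hinn0 + ((S.F p)^2 * S.mup 1 p) * hinn1

/-- `y`-contraction of `∂∂u` in the first slot -/
theorem hyc (hu : SmOn S.A u) (hu1 : ∀ q ∈ S.A, vd1 u q = 2 * u q)
    (hp : p ∈ S.A) (cc : Fin 2) :
    p.2 0 * pdy (pdy u 0) cc p + p.2 1 * pdy (pdy u 1) cc p = pdy u cc p := by
  have e : ∀ a : Fin 2, pdy (pdy u a) cc p = pdy (pdy u cc) a p :=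
    fun a => pdy_pdy_comm S.openA hu hp
  rw [e 0, e 1]
  have h := Ma hu hu1 hp cc
  unfold vd1 at h
  rw [Fin.sum_univ_two] at h
  exact h

/-- `F²·∂_r(inn_cc) = F²·innn − ∂_cc u · m_r` -/
theorem pdyInn (hI : ∀ q ∈ S.A, S.Iscal q = 0) (hu : SmOn S.A u)
    (hu1 : ∀ q ∈ S.A, vd1 u q = 2 * u q) (hp : p ∈ S.A) (cc r : Fin 2) :
    (S.F p)^2 * pdy (inn S u cc) r p
      = (S.F p)^2 * innn S u cc r p - pdy u cc p * S.mlow r p := by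
  have hdiff : ∀ a : Fin 2,
      DifferentiableAt ℝ (fun q => pdy (pdy u a) cc q * S.mup a q) p :=
    fun a => (smOn_diffAt S.openA (smOn_pdy S.openA (smOn_pdy S.openA hu a) cc) hp).mul
      (smOn_diffAt S.openA (S.smmu a) hp)
  have h1 : pdy (inn S u cc) r p
      = ∑ a, pdy (fun q => pdy (pdy u a) cc q * S.mup a q) r p := by
    unfold inn; exact pdy_sum hdiff
  have h2 : ∀ a : Fin 2, pdy (fun q => pdy (pdy u a) cc q * S.mup a q) r p
      = pdy (pdy u a) cc p * pdy (S.mup a) r p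
        + S.mup a p * pdy (pdy (pdy u a) cc) r p :=
    fun a => pdy_mul (smOn_diffAt S.openA
      (smOn_pdy S.openA (smOn_pdy S.openA hu a) cc) hp)
      (smOn_diffAt S.openA (S.smmu a) hp)
  rw [h1, Fin.sum_univ_two, h2 0, h2 1]
  unfold innn
  rw [Fin.sum_univ_two]
  linear_combination (pdy (pdy u 0) cc p) * (pdy_mup' hI hp 0 r)
    + (pdy (pdy u 1) cc p) * (pdy_mup' hI hp 1 r)
    + (-(S.mlow r p)) * hyc hu hu1 hp cc

/-- `y`-contraction of `inn` -/
theorem hyinn (hu : SmOn S.A u) (hu1 : ∀ q ∈ S.A, vd1 u q = 2 * u q)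
    (hp : p ∈ S.A) :
    p.2 0 * inn S u 0 p + p.2 1 * inn S u 1 p = Sg S u p := by
  have hva : ∀ a : Fin 2, p.2 0 * pdy (pdy u a) 0 p + p.2 1 * pdy (pdy u a) 1 p
      = pdy u a p := by
    intro a
    have h := Ma hu hu1 hp a
    unfold vd1 at h
    rw [Fin.sum_univ_two] at h
    exact h
  unfold inn Sg
  simp only [Fin.sum_univ_two]
  linear_combination (S.mup 0 p) * hva 0 + (S.mup 1 p) * hva 1

/-- `F²·∂_r S₂ = F²·(innn·m^) − 2Σ·m_r` -/
theorem pdyS2f (hI : ∀ q ∈ S.A, S.Iscal q = 0) (hu : SmOn S.A u)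
    (hu1 : ∀ q ∈ S.A, vd1 u q = 2 * u q) (hp : p ∈ S.A) (r : Fin 2) :
    (S.F p)^2 * pdy (S2f S u) r p
      = (S.F p)^2 * (∑ cc, innn S u cc r p * S.mup cc p)
        - 2 * Sg S u p * S.mlow r p := by
  have hdiff : ∀ cc : Fin 2, DifferentiableAt ℝ (fun q => inn S u cc q * S.mup cc q) p :=
    fun cc => (smOn_diffAt S.openA (smOn_inn hu cc) hp).mul
      (smOn_diffAt S.openA (S.smmu cc) hp)
  have h1 : pdy (S2f S u) r p = ∑ cc, pdy (fun q => inn S u cc q * S.mup cc q) r p := by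
    unfold S2f; exact pdy_sum hdiff
  have h2 : ∀ cc : Fin 2, pdy (fun q => inn S u cc q * S.mup cc q) r p
      = inn S u cc p * pdy (S.mup cc) r p + S.mup cc p * pdy (inn S u cc) r p :=
    fun cc => pdy_mul (smOn_diffAt S.openA (smOn_inn hu cc) hp)
      (smOn_diffAt S.openA (S.smmu cc) hp)
  rw [h1, Fin.sum_univ_two, h2 0, h2 1, Fin.sum_univ_two]
  have hSd := hSgdef (u := u) (S := S) hp
  linear_combination (S.mup 0 p) * (pdyInn hI hu hu1 hp 0 r)
    + (S.mup 1 p) * (pdyInn hI hu hu1 hp 1 r)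
    + (inn S u 0 p) * (pdy_mup' hI hp 0 r) + (inn S u 1 p) * (pdy_mup' hI hp 1 r)
    + (-(S.mlow r p)) * (hyinn hu hu1 hp) + (S.mlow r p) * hSd

/-- `F·vd2 S₂ = ε F² T − 2Σ` -/
theorem vd2S2f (hI : ∀ q ∈ S.A, S.Iscal q = 0) (hu : SmOn S.A u)
    (hu1 : ∀ q ∈ S.A, vd1 u q = 2 * u q) (hp : p ∈ S.A) :
    S.F p * S.vd2 (S2f S u) p
      = S.eps * (S.F p)^2 * Tf S u p - 2 * Sg S u p := by
  have hmm := S.mm p hp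
  rw [Fin.sum_univ_two] at hmm
  have heps := epssq (S := S)
  rw [vd2_def, Fin.sum_univ_two]
  have h0 := pdyS2f hI hu hu1 hp 0
  have h1 := pdyS2f hI hu hu1 hp 1
  rw [Fin.sum_univ_two] at h0 h1
  unfold Tf
  simp only [Fin.sum_univ_two]
  linear_combination (S.eps * S.mup 0 p) * h0 + (S.eps * S.mup 1 p) * h1
    + (-(2 * Sg S u p)) * heps
    + (-(2 * S.eps * Sg S u p)) * hmm

theorem vd2F2 (hp : p ∈ S.A) : S.vd2 (fun q => (S.F q)^2) p = 0 := by
  have h : ∀ q ∈ S.A, (S.F q)^2 = S.F q * S.F q := fun q _ => sq (S.F q) ▸ by ring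
  rw [vd2_congrOn h hp, vd2_mul (smOn_diffAt S.openA S.smF hp)
    (smOn_diffAt S.openA S.smF hp), vd2F hp]
  ring

/-- third vertical derivative formula -/
theorem Md5 (hI : ∀ q ∈ S.A, S.Iscal q = 0) (hu : SmOn S.A u)
    (hu1 : ∀ q ∈ S.A, vd1 u q = 2 * u q) (hp : p ∈ S.A) :
    S.vd2 (S.vd2 (S.vd2 u)) p
      = S.eps * (S.F p)^3 * Tf S u p - 4 * S.eps * S.vd2 u p := by
  have hF := S.Fne p hp
  have heps := epssq (S := S)
  have hout : S.vd2 (S.vd2 (S.vd2 u)) p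
      = S.vd2 (fun q => (S.F q)^2 * S2f S u q - 2 * S.eps * u q) p :=
    vd2_congrOn (fun q hq => Md2 hI hu hu1 hq) hp
  have hd1 : DifferentiableAt ℝ (fun q => (S.F q)^2 * S2f S u q) p :=
    (smOn_diffAt S.openA (smOn_sq S.smF) hp).mul (smOn_diffAt S.openA (smOn_S2f hu) hp)
  have hd2 : DifferentiableAt ℝ (fun q => 2 * S.eps * u q) p :=
    (smOn_diffAt S.openA ((smOn_const (2 * S.eps)).mul hu) hp)
  rw [hout, vd2_sub hd1 hd2,
    vd2_mul (smOn_diffAt S.openA (smOn_sq S.smF) hp)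
      (smOn_diffAt S.openA (smOn_S2f hu) hp),
    vd2_const_mul (2 * S.eps) (smOn_diffAt S.openA hu hp),
    vd2F2 hp]
  have hS2 := vd2S2f hI hu hu1 hp
  have hFSg : S.F p * Sg S u p = S.eps * S.vd2 u p := by
    rw [vd2_eq_Sg hp]
    linear_combination (-(S.F p * Sg S u p)) * heps
  apply mul_left_cancel₀ hF
  linear_combination (S.F p)^2 * hS2 + (-(2 * S.F p)) * hFSg

/-- **Master lemma**: a 2-homogeneous scalar with `4ε u_{;2} + u_{;2;2;2} = 0`
has vanishing third fibre derivatives. -/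
theorem master (hI : ∀ q ∈ S.A, S.Iscal q = 0) (hu : SmOn S.A u)
    (hu1 : ∀ q ∈ S.A, vd1 u q = 2 * u q)
    (hcond : ∀ q ∈ S.A, 4 * S.eps * S.vd2 u q + S.vd2 (S.vd2 (S.vd2 u)) q = 0)
    (hp : p ∈ S.A) (b c r : Fin 2) :
    pdy (pdy (pdy u b) c) r p = 0 := by
  have h5 := Md5 hI hu hu1 hp
  have hc := hcond p hp
  rw [h5] at hc
  have hT : Tf S u p = 0 := by
    have hF := S.Fne p hp
    have h6 : S.eps * ((S.F p)^3 * Tf S u p) = 0 := by linarith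
    rcases mul_eq_zero.mp h6 with h7 | h7
    · exact absurd h7 (epsne (S := S))
    · rcases mul_eq_zero.mp h7 with h8 | h8
      · exact absurd h8 (pow_ne_zero 3 hF)
      · exact h8
  rw [Mc hu hu1 hp b c r, hT]
  ring

end S4M


/-! ### the geodesic spray of a Riemannian metric is quadratic -/

namespace S4G

open S4Tool S4Frame S4Riem

variable {S : PFSurf} {p : Pt} {i j a b c : Fin 2}

/-- `H_{ki} = ∂_{x^k}∂_{y^i}F²` -/
def Hf (S : PFSurf) (i k : Fin 2) : Pt → ℝ := fun q => pdx (pdy (F2 S) i) k q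

theorem smHf : SmOn S.A (Hf S i j) :=
  smOn_pdx S.openA (smOn_pdy S.openA (smF2 (S := S)) i) j

/-- generic: `∂_a (∑_j g_{ij}·h_j) = ∑_j g_{ij}·∂_a h_j` in the Riemannian case -/
theorem dcontract (hI : ∀ q ∈ S.A, S.Iscal q = 0) {h : Fin 2 → Pt → ℝ}
    (hsm : ∀ j, SmOn S.A (h j)) (hp : p ∈ S.A) (i a : Fin 2) :
    pdy (fun q => ∑ j, gm S i j q * h j q) a p = ∑ j, gm S i j p * pdy (h j) a p := by
  have hdiff : ∀ j : Fin 2, DifferentiableAt ℝ (fun q => gm S i j q * h j q) p :=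
    fun j => (smOn_diffAt S.openA (smg (S := S)) hp).mul (smOn_diffAt S.openA (hsm j) hp)
  rw [pdy_sum hdiff]
  have he : ∀ j : Fin 2, pdy (fun q => gm S i j q * h j q) a p
      = gm S i j p * pdy (h j) a p := by
    intro j
    rw [pdy_mul (smOn_diffAt S.openA (smg (S := S)) hp)
      (smOn_diffAt S.openA (hsm j) hp), pdy_g hI hp]
    ring
  rw [Fin.sum_univ_two, Fin.sum_univ_two, he 0, he 1]

/-- first fibre derivative of the right-hand side of the spray equation -/
theorem dR1 (hp : p ∈ S.A) (i a : Fin 2) :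
    pdy (fun q => (∑ k, q.2 k * Hf S i k q) - pdx (F2 S) i q) a p
      = Hf S i a p + (∑ k, p.2 k * pdx (pdy (pdy (F2 S) i) a) k p)
        - pdx (pdy (F2 S) a) i p := by
  have hsmy : ∀ k : Fin 2, SmOn S.A (fun q : Pt => q.2 k * Hf S i k q) :=
    fun k => (smOn_coordy k).mul (smHf (S := S))
  have hd1 : DifferentiableAt ℝ (fun q : Pt => ∑ k, q.2 k * Hf S i k q) p :=
    smOn_diffAt S.openA (smOn_sum hsmy) hp
  have hd2 : DifferentiableAt ℝ (pdx (F2 S) i) p :=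
    smOn_diffAt S.openA (smOn_pdx S.openA (smF2 (S := S)) i) hp
  rw [pdy_sub hd1 hd2]
  have hterm : ∀ k : Fin 2, pdy (fun q : Pt => q.2 k * Hf S i k q) a p
      = (if k = a then (1:ℝ) else 0) * Hf S i k p
        + p.2 k * pdx (pdy (pdy (F2 S) i) a) k p := by
    intro k
    rw [pdy_mul (smOn_diffAt S.openA (smOn_coordy k) hp)
      (smOn_diffAt S.openA (smHf (S := S)) hp), pdy_coordy]
    have hc : pdy (Hf S i k) a p = pdx (pdy (pdy (F2 S) i) a) k p := by
      unfold Hf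
      exact pdy_pdx_comm S.openA (smOn_pdy S.openA (smF2 (S := S)) i) hp
    rw [hc]
    ring
  have hsum : pdy (fun q : Pt => ∑ k, q.2 k * Hf S i k q) a p
      = ∑ k, pdy (fun q : Pt => q.2 k * Hf S i k q) a p :=
    pdy_sum (fun k => smOn_diffAt S.openA (hsmy k) hp)
  have hswap : pdy (pdx (F2 S) i) a p = pdx (pdy (F2 S) a) i p :=
    pdy_pdx_comm S.openA (smF2 (S := S)) hp
  rw [hsum, Fin.sum_univ_two, hterm 0, hterm 1, hswap, Fin.sum_univ_two]
  fin_cases a <;> simp <;> ring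

/-- second fibre derivative of the right-hand side -/
theorem dR2 (hI : ∀ q ∈ S.A, S.Iscal q = 0) (hp : p ∈ S.A) (i a b : Fin 2) :
    pdy (fun q => Hf S i a q + (∑ k, q.2 k * pdx (pdy (pdy (F2 S) i) a) k q)
        - pdx (pdy (F2 S) a) i q) b p
      = pdx (pdy (pdy (F2 S) i) b) a p + pdx (pdy (pdy (F2 S) i) a) b p
        - pdx (pdy (pdy (F2 S) a) b) i p := by
  have hsm3 : ∀ k : Fin 2, SmOn S.A (pdx (pdy (pdy (F2 S) i) a) k) :=
    fun k => smOn_pdx S.openA (smOn_pdy S.openA (smOn_pdy S.openA (smF2 (S := S)) i) a) k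
  have hsmy : ∀ k : Fin 2, SmOn S.A (fun q : Pt => q.2 k * pdx (pdy (pdy (F2 S) i) a) k q) :=
    fun k => (smOn_coordy k).mul (hsm3 k)
  have hd1 : DifferentiableAt ℝ (fun q : Pt => Hf S i a q
      + ∑ k, q.2 k * pdx (pdy (pdy (F2 S) i) a) k q) p :=
    smOn_diffAt S.openA ((smHf (S := S)).add (smOn_sum hsmy)) hp
  have hd2 : DifferentiableAt ℝ (pdx (pdy (F2 S) a) i) p :=
    smOn_diffAt S.openA (smOn_pdx S.openA (smOn_pdy S.openA (smF2 (S := S)) a) i) hp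
  rw [pdy_sub hd1 hd2,
    pdy_add (smOn_diffAt S.openA (smHf (S := S)) hp)
      (smOn_diffAt S.openA (smOn_sum hsmy) hp)]
  have hH : pdy (Hf S i a) b p = pdx (pdy (pdy (F2 S) i) b) a p := by
    unfold Hf
    exact pdy_pdx_comm S.openA (smOn_pdy S.openA (smF2 (S := S)) i) hp
  have hterm : ∀ k : Fin 2, pdy (fun q : Pt => q.2 k * pdx (pdy (pdy (F2 S) i) a) k q) b p
      = (if k = b then (1:ℝ) else 0) * pdx (pdy (pdy (F2 S) i) a) k p := by
    intro k
    rw [pdy_mul (smOn_diffAt S.openA (smOn_coordy k) hp)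
      (smOn_diffAt S.openA (hsm3 k) hp), pdy_coordy,
      pdy_pdx_comm S.openA (smOn_pdy S.openA (smOn_pdy S.openA (smF2 (S := S)) i) a) hp]
    have hz : pdx (pdy (pdy (pdy (F2 S) i) a) b) k p = 0 :=
      pdx_zero_on S.openA (fun q hq => d3F2 hI hq) hp
    rw [hz]
    ring
  have hsum : pdy (fun q : Pt => ∑ k, q.2 k * pdx (pdy (pdy (F2 S) i) a) k q) b p
      = ∑ k, pdy (fun q : Pt => q.2 k * pdx (pdy (pdy (F2 S) i) a) k q) b p :=
    pdy_sum (fun k => smOn_diffAt S.openA (hsmy k) hp)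
  have hswap : pdy (pdx (pdy (F2 S) a) i) b p = pdx (pdy (pdy (F2 S) a) b) i p :=
    pdy_pdx_comm S.openA (smOn_pdy S.openA (smF2 (S := S)) a) hp
  rw [hH, hsum, Fin.sum_univ_two, hterm 0, hterm 1, hswap]
  fin_cases b <;> simp

/-- the Berwald curvature of the underlying Riemannian metric vanishes -/
theorem d3G (hI : ∀ q ∈ S.A, S.Iscal q = 0) (hp : p ∈ S.A) (j a b c : Fin 2) :
    pdy (pdy (pdy (S.Gs j) a) b) c p = 0 := by
  -- the contracted claim
  have key : ∀ i : Fin 2, ∑ l, gm S i l p * (4 * pdy (pdy (pdy (S.Gs l) a) b) c p) = 0 := by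
    intro i
    -- left chain
    have hsmG1 : ∀ l : Fin 2, SmOn S.A (fun q => 4 * pdy (S.Gs l) a q) :=
      fun l => (smOn_const 4).mul (smOn_pdy S.openA (S.smG l) a)
    have hsmG2 : ∀ l : Fin 2, SmOn S.A (fun q => 4 * pdy (pdy (S.Gs l) a) b q) :=
      fun l => (smOn_const 4).mul (smOn_pdy S.openA (smOn_pdy S.openA (S.smG l) a) b)
    have hL0 : ∀ q ∈ S.A, pdy (fun q' => ∑ l, gm S i l q' * (4 * S.Gs l q')) a q
        = ∑ l, gm S i l q * (4 * pdy (S.Gs l) a q) := by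
      intro q hq
      rw [dcontract hI (fun l => (smOn_const 4).mul (S.smG l)) hq i a]
      have he : ∀ l : Fin 2, pdy (fun q' => 4 * S.Gs l q') a q = 4 * pdy (S.Gs l) a q :=
        fun l => pdy_const_mul 4 (smOn_diffAt S.openA (S.smG l) hq)
      rw [Fin.sum_univ_two, Fin.sum_univ_two, he 0, he 1]
    have hL1 : ∀ q ∈ S.A, pdy (pdy (fun q' => ∑ l, gm S i l q' * (4 * S.Gs l q')) a) b q
        = ∑ l, gm S i l q * (4 * pdy (pdy (S.Gs l) a) b q) := by
      intro q hq
      rw [pdy_congrOn S.openA hL0 hq, dcontract hI hsmG1 hq i b]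
      have he : ∀ l : Fin 2, pdy (fun q' => 4 * pdy (S.Gs l) a q') b q
          = 4 * pdy (pdy (S.Gs l) a) b q :=
        fun l => pdy_const_mul 4 (smOn_diffAt S.openA (smOn_pdy S.openA (S.smG l) a) hq)
      rw [Fin.sum_univ_two, Fin.sum_univ_two, he 0, he 1]
    have hL2 : pdy (pdy (pdy (fun q' => ∑ l, gm S i l q' * (4 * S.Gs l q')) a) b) c p
        = ∑ l, gm S i l p * (4 * pdy (pdy (pdy (S.Gs l) a) b) c p) := by
      rw [pdy_congrOn S.openA hL1 hp, dcontract hI hsmG2 hp i c]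
      have he : ∀ l : Fin 2, pdy (fun q' => 4 * pdy (pdy (S.Gs l) a) b q') c p
          = 4 * pdy (pdy (pdy (S.Gs l) a) b) c p :=
        fun l => pdy_const_mul 4 (smOn_diffAt S.openA
          (smOn_pdy S.openA (smOn_pdy S.openA (S.smG l) a) b) hp)
      rw [Fin.sum_univ_two, Fin.sum_univ_two, he 0, he 1]
    -- right chain
    have hR0 : ∀ q ∈ S.A, pdy (fun q' => ∑ l, gm S i l q' * (4 * S.Gs l q')) a q
        = Hf S i a q + (∑ k, q.2 k * pdx (pdy (pdy (F2 S) i) a) k q)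
          - pdx (pdy (F2 S) a) i q := by
      intro q hq
      have hspray : ∀ q' ∈ S.A, (fun q'' => ∑ l, gm S i l q'' * (4 * S.Gs l q'')) q'
          = (∑ k, q'.2 k * Hf S i k q') - pdx (F2 S) i q' := by
        intro q' hq'
        exact S.sprayEq q' hq' i
      rw [pdy_congrOn S.openA hspray hq]
      exact dR1 hq i a
    have hR1 : ∀ q ∈ S.A, pdy (pdy (fun q' => ∑ l, gm S i l q' * (4 * S.Gs l q')) a) b q
        = pdx (pdy (pdy (F2 S) i) b) a q + pdx (pdy (pdy (F2 S) i) a) b q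
          - pdx (pdy (pdy (F2 S) a) b) i q := by
      intro q hq
      rw [pdy_congrOn S.openA hR0 hq]
      exact dR2 hI hq i a b
    have hR2 : pdy (pdy (pdy (fun q' => ∑ l, gm S i l q' * (4 * S.Gs l q')) a) b) c p = 0 := by
      rw [pdy_congrOn S.openA hR1 hp]
      have hd3 : ∀ X Y Z W : Fin 2,
          pdy (pdx (pdy (pdy (F2 S) X) Y) Z) c p = pdx (pdy (pdy (pdy (F2 S) X) Y) c) Z p :=
        fun X Y Z W => pdy_pdx_comm S.openA
          (smOn_pdy S.openA (smOn_pdy S.openA (smF2 (S := S)) X) Y) hp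
      have hz : ∀ X Y Z : Fin 2, pdx (pdy (pdy (pdy (F2 S) X) Y) c) Z p = 0 :=
        fun X Y Z => pdx_zero_on S.openA (fun q hq => d3F2 hI hq) hp
      have hdiff3 : ∀ X Y Z : Fin 2, DifferentiableAt ℝ (pdx (pdy (pdy (F2 S) X) Y) Z) p :=
        fun X Y Z => smOn_diffAt S.openA (smOn_pdx S.openA
          (smOn_pdy S.openA (smOn_pdy S.openA (smF2 (S := S)) X) Y) Z) hp
      rw [pdy_sub ((hdiff3 i b a).fun_add (hdiff3 i a b)) (hdiff3 a b i),
        pdy_add (hdiff3 i b a) (hdiff3 i a b),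
        hd3 i b a 0, hd3 i a b 0, hd3 a b i 0, hz i b a, hz i a b, hz a b i]
      ring
    rw [← hL2, hR2]
  have hv := ginv_cancel hp key
  have h4 := hv j
  linarith

end S4G


namespace S4M

open S4Tool S4Frame S4Riem S4V

variable {S : PFSurf} {u : Pt → ℝ} {p : Pt}

/-- variant of `pdySg` for `0`-homogeneous scalars -/
theorem pdySg0 (hI : ∀ q ∈ S.A, S.Iscal q = 0) (hu : SmOn S.A u)
    (hu0 : ∀ q ∈ S.A, vd1 u q = 0) (hp : p ∈ S.A) (cc : Fin 2) :
    (S.F p)^2 * pdy (Sg S u) cc p = (S.F p)^2 * inn S u cc p := by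
  have hdiff : ∀ a : Fin 2, DifferentiableAt ℝ (fun q => pdy u a q * S.mup a q) p :=
    fun a => (smOn_diffAt S.openA (smOn_pdy S.openA hu a) hp).mul
      (smOn_diffAt S.openA (S.smmu a) hp)
  have h1 : pdy (Sg S u) cc p = ∑ a, pdy (fun q => pdy u a q * S.mup a q) cc p := by
    unfold Sg; exact pdy_sum hdiff
  have h2 : ∀ a : Fin 2, pdy (fun q => pdy u a q * S.mup a q) cc p
      = pdy u a p * pdy (S.mup a) cc p + S.mup a p * pdy (pdy u a) cc p :=
    fun a => pdy_mul (smOn_diffAt S.openA (smOn_pdy S.openA hu a) hp)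
      (smOn_diffAt S.openA (S.smmu a) hp)
  have hvd1 : p.2 0 * pdy u 0 p + p.2 1 * pdy u 1 p = 0 := by
    have h := hu0 p hp; unfold vd1 at h; rw [Fin.sum_univ_two] at h; exact h
  rw [h1, Fin.sum_univ_two, h2 0, h2 1]
  unfold inn
  rw [Fin.sum_univ_two]
  linear_combination (pdy u 0 p) * (pdy_mup' hI hp 0 cc)
    + (pdy u 1 p) * (pdy_mup' hI hp 1 cc) + (-(S.mlow cc p)) * hvd1

/-- variant of `Md2` for `0`-homogeneous scalars -/
theorem Md20 (hI : ∀ q ∈ S.A, S.Iscal q = 0) (hu : SmOn S.A u)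
    (hu0 : ∀ q ∈ S.A, vd1 u q = 0) (hp : p ∈ S.A) :
    S.vd2 (S.vd2 u) p = (S.F p)^2 * S2f S u p := by
  have hF := S.Fne p hp
  have hSgsm : SmOn S.A (Sg S u) := smOn_Sg hu
  have hX : ∀ cc : Fin 2, pdy (S.vd2 u) cc p
      = S.eps * (S.F p * pdy (Sg S u) cc p + Sg S u p * pdy S.F cc p) := by
    intro cc
    have he : S.vd2 u = fun q => S.eps * (S.F q * Sg S u q) := by
      funext q; rw [vd2_def]; unfold Sg; ring
    rw [he, pdy_const_mul S.eps ((smOn_diffAt S.openA S.smF hp).fun_mul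
      (smOn_diffAt S.openA hSgsm hp)),
      pdy_mul (smOn_diffAt S.openA S.smF hp) (smOn_diffAt S.openA hSgsm hp)]
  have h0 := pdySg0 hI hu hu0 hp 0
  have h1 := pdySg0 hI hu hu0 hp 1
  have hmell := S.mell p hp
  rw [Fin.sum_univ_two] at hmell
  have heps := epssq (S := S)
  have hinn0 : inn S u 0 p = pdy (pdy u 0) 0 p * S.mup 0 p
      + pdy (pdy u 1) 0 p * S.mup 1 p := by unfold inn; rw [Fin.sum_univ_two]
  have hinn1 : inn S u 1 p = pdy (pdy u 0) 1 p * S.mup 0 p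
      + pdy (pdy u 1) 1 p * S.mup 1 p := by unfold inn; rw [Fin.sum_univ_two]
  rw [vd2_def (f := S.vd2 u), Fin.sum_univ_two, hX 0, hX 1]
  unfold S2f inn
  simp only [Fin.sum_univ_two]
  linear_combination ((S.F p)^2 * (pdy (Sg S u) 0 p * S.mup 0 p
      + pdy (Sg S u) 1 p * S.mup 1 p)
      + S.F p * Sg S u p * (S.mup 0 p * pdy S.F 0 p + S.mup 1 p * pdy S.F 1 p)) * heps
    + (S.mup 0 p) * h0 + (S.mup 1 p) * h1
    + (S.F p * Sg S u p) * hmell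
    + ((S.F p)^2 * S.mup 0 p) * hinn0 + ((S.F p)^2 * S.mup 1 p) * hinn1

end S4M

/-! ### the anisotropic conformal change -/

namespace S4C

open S4Tool S4Frame S4Riem S4V S4M

variable {S : PFSurf} (C : AnisoChange S) {p : Pt} {i j k : Fin 2}

theorem vd1phi (hp : p ∈ S.A) : vd1 C.phi p = 0 := by
  have h := euler_deg 0 S.openA C.smphi hp (fun t ht => by
    rw [C.homphi p hp t ht]; ring)
  simpa using h

theorem smOn_ellUp : SmOn S.A (S.ellUp i) :=
  smOn_div (smOn_coordy i) S.smF S.Fne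

theorem smOn_hdel {f : Pt → ℝ} (hf : SmOn S.A f) (i : Fin 2) : SmOn S.A (S.hdel f i) := by
  have h : SmOn S.A (fun p => pdx f i p - ∑ j, pdy (S.Gs j) i p * pdy f j p) :=
    (smOn_pdx S.openA hf i).sub
      (smOn_sum (fun j => (smOn_pdy S.openA (S.smG j) i).mul (smOn_pdy S.openA hf j)))
  exact h

theorem smOn_hd1 {f : Pt → ℝ} (hf : SmOn S.A f) : SmOn S.A (S.hd1 f) := by
  have h : SmOn S.A (fun p => ∑ i, S.ellUp i p * S.hdel f i p) :=
    smOn_sum (fun i => (smOn_ellUp (S := S)).mul (smOn_hdel hf i))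
  exact h

theorem smOn_hd2 {f : Pt → ℝ} (hf : SmOn S.A f) : SmOn S.A (S.hd2 f) := by
  have h : SmOn S.A (fun p => S.eps * ∑ i, S.mup i p * S.hdel f i p) :=
    (smOn_const S.eps).mul (smOn_sum (fun i => (S.smmu i).mul (smOn_hdel hf i)))
  exact h

theorem smOn_qcore : SmOn S.A C.qcore := by
  have h : SmOn S.A (fun p => S.vd2 C.phi p * S.hd1 C.phi p
      + S.vd2 (S.hd1 C.phi) p - 2 * S.hd2 C.phi p) :=
    (((smOn_vd2 C.smphi).mul (smOn_hd1 C.smphi)).add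
      (smOn_vd2 (smOn_hd1 C.smphi))).sub ((smOn_const 2).mul (smOn_hd2 C.smphi))
  exact h

theorem smOn_sigma : SmOn S.A C.sigma := by
  have h : SmOn S.A (fun p => S.vd2 (S.vd2 C.phi) p
      + S.eps * S.Iscal p * S.vd2 C.phi p + 2 * (S.vd2 C.phi p)^2) :=
    ((smOn_vd2 (smOn_vd2 C.smphi)).add
      (((smOn_const S.eps).mul S.smI).mul (smOn_vd2 C.smphi))).add
      ((smOn_const 2).mul (smOn_sq (smOn_vd2 C.smphi)))
  exact h

/-- the denominator of `ρ` -/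
def den (C : AnisoChange S) : Pt → ℝ :=
  fun p => C.sigma p + S.eps - (S.vd2 C.phi p)^2

theorem smOn_den : SmOn S.A (den C) :=
  ((smOn_sigma C).add (smOn_const S.eps)).sub (smOn_sq (smOn_vd2 C.smphi))

/-- the regularity condition in terms of `σ, ε, φ_{;2}` -/
theorem den_ne (hRiem : ∀ q ∈ S.A, S.Iscal q = 0) (hp : p ∈ S.A) : den C p ≠ 0 := by
  have hreg := C.reg p hp
  have h1 : S.vd2 (S.vd2 C.phi) p = (S.F p)^2 * S2f S C.phi p :=
    Md20 hRiem C.smphi (fun q hq => vd1phi C hq) hp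
  have h2 : S.vd2 C.phi p = S.eps * S.F p * Sg S C.phi p := vd2_eq_Sg hp
  have heps := epssq (S := S)
  have heq : den C p = (S.F p)^2
      * (∑ i, ∑ j, (pdy (pdy C.phi j) i p + pdy C.phi i p * pdy C.phi j p)
          * S.mup i p * S.mup j p) + S.eps := by
    unfold den AnisoChange.sigma
    rw [h1, hRiem p hp, h2]
    unfold S2f inn Sg
    simp only [Fin.sum_univ_two]
    linear_combination ((S.F p)^2 * (pdy C.phi 0 p * S.mup 0 p
      + pdy C.phi 1 p * S.mup 1 p)^2) * heps
  rw [heq]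
  exact hreg

theorem smOn_rho (hRiem : ∀ q ∈ S.A, S.Iscal q = 0) : SmOn S.A C.rho := by
  have h : SmOn S.A (fun p => (1:ℝ) / den C p) :=
    smOn_div (smOn_const 1) (smOn_den C) (fun q hq => den_ne C hRiem hq)
  exact h

theorem smOn_Q (hRiem : ∀ q ∈ S.A, S.Iscal q = 0) : SmOn S.A C.Q := by
  have h : SmOn S.A (fun p => (1/2) * S.eps * C.rho p * (S.F p)^2 * C.qcore p) :=
    (((((smOn_const (1/2)).mul (smOn_const S.eps)).mul (smOn_rho C hRiem)).mul
      (smOn_sq S.smF)).mul (smOn_qcore C))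
  exact h

theorem smOn_P (hRiem : ∀ q ∈ S.A, S.Iscal q = 0) : SmOn S.A C.P := by
  have h : SmOn S.A (fun p => -(1/2) * C.rho p * (S.F p)^2 * S.vd2 C.phi p * C.qcore p
      + (1/2) * (S.F p)^2 * S.hd1 C.phi p) :=
    ((((((smOn_const (-(1/2))).mul (smOn_rho C hRiem)).mul (smOn_sq S.smF)).mul
      (smOn_vd2 C.smphi)).mul (smOn_qcore C)).add
      (((smOn_const (1/2)).mul (smOn_sq S.smF)).mul (smOn_hd1 C.smphi)))
  exact h

end S4C


namespace S4C

open S4Tool S4Frame S4Riem S4V S4M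

variable {S : PFSurf} (C : AnisoChange S) {p : Pt} {i j k : Fin 2}

theorem vd1_const (c : ℝ) : vd1 (fun _ : Pt => c) p = 0 := by
  unfold vd1
  have h : ∀ l : Fin 2, pdy (fun _ : Pt => c) l p = 0 := fun l => pdy_const c
  rw [Fin.sum_univ_two, h 0, h 1]
  ring

theorem vd1_pdxphi (hp : p ∈ S.A) : vd1 (pdx C.phi i) p = 0 := by
  rw [← pdx_vd1 S.openA C.smphi hp i]
  exact pdx_zero_on S.openA (fun q hq => vd1phi C hq) hp

theorem vd1_pdyGs (hp : p ∈ S.A) : vd1 (pdy (S.Gs j) i) p = pdy (S.Gs j) i p := by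
  rw [vd1_pdy_eq (S.smG j) hp i,
    pdy_congrOn S.openA (fun q hq => vd1Gs hq) hp,
    pdy_const_mul 2 (smOn_diffAt S.openA (S.smG j) hp)]
  ring

theorem vd1_pdyphi (hp : p ∈ S.A) : vd1 (pdy C.phi j) p = -pdy C.phi j p := by
  rw [vd1_pdy_eq C.smphi hp j,
    pdy_zero_on S.openA (fun q hq => vd1phi C hq) hp]
  ring

theorem vd1_hdelphi (hp : p ∈ S.A) : vd1 (S.hdel C.phi i) p = 0 := by
  have hrep : S.hdel C.phi i
      = fun q => pdx C.phi i q - ∑ j, pdy (S.Gs j) i q * pdy C.phi j q := rfl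
  have hdiff : ∀ j : Fin 2,
      DifferentiableAt ℝ (fun q => pdy (S.Gs j) i q * pdy C.phi j q) p :=
    fun j => (smOn_diffAt S.openA (smOn_pdy S.openA (S.smG j) i) hp).mul
      (smOn_diffAt S.openA (smOn_pdy S.openA C.smphi j) hp)
  rw [hrep, vd1_sub (smOn_diffAt S.openA (smOn_pdx S.openA C.smphi i) hp)
    (smOn_diffAt S.openA (smOn_sum (fun j => (smOn_pdy S.openA (S.smG j) i).mul
      (smOn_pdy S.openA C.smphi j))) hp),
    vd1_pdxphi C hp, vd1_sum hdiff]
  have he : ∀ j : Fin 2, vd1 (fun q => pdy (S.Gs j) i q * pdy C.phi j q) p = 0 := by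
    intro j
    rw [vd1_mul (smOn_diffAt S.openA (smOn_pdy S.openA (S.smG j) i) hp)
      (smOn_diffAt S.openA (smOn_pdy S.openA C.smphi j) hp),
      vd1_pdyGs hp, vd1_pdyphi C hp]
    ring
  rw [Fin.sum_univ_two, he 0, he 1]
  ring

theorem vd1_hd1phi (hp : p ∈ S.A) : vd1 (S.hd1 C.phi) p = 0 := by
  have hrep : S.hd1 C.phi = fun q => ∑ i, S.ellUp i q * S.hdel C.phi i q := rfl
  have hdiff : ∀ i : Fin 2, DifferentiableAt ℝ (fun q => S.ellUp i q * S.hdel C.phi i q) p :=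
    fun i => (smOn_diffAt S.openA (smOn_ellUp (S := S)) hp).mul
      (smOn_diffAt S.openA (smOn_hdel C.smphi i) hp)
  rw [hrep, vd1_sum hdiff]
  have he : ∀ i : Fin 2, vd1 (fun q => S.ellUp i q * S.hdel C.phi i q) p = 0 := by
    intro i
    rw [vd1_mul (smOn_diffAt S.openA (smOn_ellUp (S := S)) hp)
      (smOn_diffAt S.openA (smOn_hdel C.smphi i) hp),
      vd1_ellUp hp, vd1_hdelphi C hp]
    ring
  rw [Fin.sum_univ_two, he 0, he 1]
  ring

theorem vd1_hd2phi (hp : p ∈ S.A) : vd1 (S.hd2 C.phi) p = 0 := by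
  have hrep : S.hd2 C.phi = fun q => S.eps * ∑ i, S.mup i q * S.hdel C.phi i q := rfl
  have hdiff : ∀ i : Fin 2, DifferentiableAt ℝ (fun q => S.mup i q * S.hdel C.phi i q) p :=
    fun i => (smOn_diffAt S.openA (S.smmu i) hp).mul
      (smOn_diffAt S.openA (smOn_hdel C.smphi i) hp)
  rw [hrep, vd1_const_mul S.eps (smOn_diffAt S.openA
    (smOn_sum (fun i => (S.smmu i).mul (smOn_hdel C.smphi i))) hp), vd1_sum hdiff]
  have he : ∀ i : Fin 2, vd1 (fun q => S.mup i q * S.hdel C.phi i q) p = 0 := by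
    intro i
    rw [vd1_mul (smOn_diffAt S.openA (S.smmu i) hp)
      (smOn_diffAt S.openA (smOn_hdel C.smphi i) hp),
      vd1_mup hp, vd1_hdelphi C hp]
    ring
  rw [Fin.sum_univ_two, he 0, he 1]
  ring

theorem vd1_vd2phi (hp : p ∈ S.A) : vd1 (S.vd2 C.phi) p = 0 := by
  rw [vd1_vd2_comm C.smphi hp]
  exact vd2_zero_on (fun q hq => vd1phi C hq) hp

theorem vd1_vd2vd2phi (hp : p ∈ S.A) : vd1 (S.vd2 (S.vd2 C.phi)) p = 0 := by
  rw [vd1_vd2_comm (smOn_vd2 C.smphi) hp]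
  exact vd2_zero_on (fun q hq => vd1_vd2phi C hq) hp

theorem vd1_vd2hd1phi (hp : p ∈ S.A) : vd1 (S.vd2 (S.hd1 C.phi)) p = 0 := by
  rw [vd1_vd2_comm (smOn_hd1 C.smphi) hp]
  exact vd2_zero_on (fun q hq => vd1_hd1phi C hq) hp

theorem vd1_qcore (hp : p ∈ S.A) : vd1 C.qcore p = 0 := by
  have hrep : C.qcore = fun q => S.vd2 C.phi q * S.hd1 C.phi q
      + S.vd2 (S.hd1 C.phi) q - 2 * S.hd2 C.phi q := rfl
  rw [hrep, vd1_sub (smOn_diffAt S.openA (((smOn_vd2 C.smphi).mul (smOn_hd1 C.smphi)).add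
      (smOn_vd2 (smOn_hd1 C.smphi))) hp)
    (smOn_diffAt S.openA ((smOn_const 2).mul (smOn_hd2 C.smphi)) hp),
    vd1_add (smOn_diffAt S.openA ((smOn_vd2 C.smphi).mul (smOn_hd1 C.smphi)) hp)
      (smOn_diffAt S.openA (smOn_vd2 (smOn_hd1 C.smphi)) hp),
    vd1_mul (smOn_diffAt S.openA (smOn_vd2 C.smphi) hp)
      (smOn_diffAt S.openA (smOn_hd1 C.smphi) hp),
    vd1_const_mul 2 (smOn_diffAt S.openA (smOn_hd2 C.smphi) hp),
    vd1_vd2phi C hp, vd1_hd1phi C hp, vd1_hd2phi C hp, vd1_vd2hd1phi C hp]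
  ring

theorem vd1_sigma (hp : p ∈ S.A) (hRiem : ∀ q ∈ S.A, S.Iscal q = 0) :
    vd1 C.sigma p = 0 := by
  have hrep : C.sigma = fun q => S.vd2 (S.vd2 C.phi) q
      + S.eps * S.Iscal q * S.vd2 C.phi q + 2 * (S.vd2 C.phi q)^2 := rfl
  have hd2' : DifferentiableAt ℝ (fun q => S.eps * S.Iscal q * S.vd2 C.phi q) p :=
    smOn_diffAt S.openA (((smOn_const S.eps).mul S.smI).mul (smOn_vd2 C.smphi)) hp
  have hd3 : DifferentiableAt ℝ (fun q => 2 * (S.vd2 C.phi q)^2) p :=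
    smOn_diffAt S.openA ((smOn_const 2).mul (smOn_sq (smOn_vd2 C.smphi))) hp
  rw [hrep, vd1_add (DifferentiableAt.fun_add
      (smOn_diffAt S.openA (smOn_vd2 (smOn_vd2 C.smphi)) hp) hd2') hd3,
    vd1_add (smOn_diffAt S.openA (smOn_vd2 (smOn_vd2 C.smphi)) hp) hd2']
  have hz1 : vd1 (fun q => S.eps * S.Iscal q * S.vd2 C.phi q) p = 0 :=
    vd1_zero_on S.openA (fun q hq => by rw [hRiem q hq]; ring) hp
  have hz2 : vd1 (fun q => 2 * (S.vd2 C.phi q)^2) p = 0 := by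
    have hsq : ∀ q ∈ S.A, 2 * (S.vd2 C.phi q)^2
        = 2 * (S.vd2 C.phi q * S.vd2 C.phi q) := fun q _ => by ring
    rw [vd1_congrOn S.openA hsq hp,
      vd1_const_mul 2 ((smOn_diffAt S.openA (smOn_vd2 C.smphi) hp).fun_mul
        (smOn_diffAt S.openA (smOn_vd2 C.smphi) hp)),
      vd1_mul (smOn_diffAt S.openA (smOn_vd2 C.smphi) hp)
        (smOn_diffAt S.openA (smOn_vd2 C.smphi) hp),
      vd1_vd2phi C hp]
    ring
  rw [hz1, hz2, vd1_vd2vd2phi C hp]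
  ring

theorem vd1_den (hp : p ∈ S.A) (hRiem : ∀ q ∈ S.A, S.Iscal q = 0) :
    vd1 (den C) p = 0 := by
  have hrep : den C = fun q => C.sigma q + S.eps - (S.vd2 C.phi q)^2 := rfl
  have hdsq : DifferentiableAt ℝ (fun q => (S.vd2 C.phi q)^2) p :=
    smOn_diffAt S.openA (smOn_sq (smOn_vd2 C.smphi)) hp
  rw [hrep, vd1_sub (DifferentiableAt.fun_add (smOn_diffAt S.openA (smOn_sigma C) hp)
      (differentiableAt_const S.eps)) hdsq,
    vd1_add (smOn_diffAt S.openA (smOn_sigma C) hp) (differentiableAt_const S.eps)]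
  have hz2 : vd1 (fun q => (S.vd2 C.phi q)^2) p = 0 := by
    have hsq : ∀ q ∈ S.A, (S.vd2 C.phi q)^2
        = S.vd2 C.phi q * S.vd2 C.phi q := fun q _ => by ring
    rw [vd1_congrOn S.openA hsq hp,
      vd1_mul (smOn_diffAt S.openA (smOn_vd2 C.smphi) hp)
        (smOn_diffAt S.openA (smOn_vd2 C.smphi) hp),
      vd1_vd2phi C hp]
    ring
  rw [hz2, vd1_sigma C hp hRiem, vd1_const]
  ring

theorem vd1_rho (hp : p ∈ S.A) (hRiem : ∀ q ∈ S.A, S.Iscal q = 0) :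
    vd1 C.rho p = 0 := by
  have hrep : C.rho = fun q => (1:ℝ) / den C q := rfl
  rw [hrep, vd1_div (differentiableAt_const 1) (smOn_diffAt S.openA (smOn_den C) hp)
    (den_ne C hRiem hp), vd1_den C hp hRiem, vd1_const]
  ring

theorem vd1_Q (hp : p ∈ S.A) (hRiem : ∀ q ∈ S.A, S.Iscal q = 0) :
    vd1 C.Q p = 2 * C.Q p := by
  have hrep : ∀ q ∈ S.A, C.Q q
      = ((1/2) * S.eps) * (C.rho q * ((S.F q)^2 * C.qcore q)) := by
    intro q _; unfold AnisoChange.Q; ring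
  have hd1 : DifferentiableAt ℝ (fun q => (S.F q)^2 * C.qcore q) p :=
    smOn_diffAt S.openA ((smOn_sq S.smF).mul (smOn_qcore C)) hp
  have hd0 : DifferentiableAt ℝ (fun q => C.rho q * ((S.F q)^2 * C.qcore q)) p :=
    (smOn_diffAt S.openA (smOn_rho C hRiem) hp).mul hd1
  rw [vd1_congrOn S.openA hrep hp, vd1_const_mul _ hd0,
    vd1_mul (smOn_diffAt S.openA (smOn_rho C hRiem) hp) hd1,
    vd1_mul (smOn_diffAt S.openA (smOn_sq S.smF) hp)
      (smOn_diffAt S.openA (smOn_qcore C) hp),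
    vd1_rho C hp hRiem, vd1_qcore C hp]
  have hF2 : vd1 (fun q => (S.F q)^2) p = 2 * (S.F p)^2 := vd1F2 hp
  rw [hF2]
  unfold AnisoChange.Q
  ring

theorem vd1_P (hp : p ∈ S.A) (hRiem : ∀ q ∈ S.A, S.Iscal q = 0) :
    vd1 C.P p = 2 * C.P p := by
  have hrep : ∀ q ∈ S.A, C.P q
      = (-(1/2)) * (C.rho q * (S.vd2 C.phi q * ((S.F q)^2 * C.qcore q)))
        + (1/2) * ((S.F q)^2 * S.hd1 C.phi q) := by
    intro q _; unfold AnisoChange.P; ring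
  have hd1 : DifferentiableAt ℝ (fun q => (S.F q)^2 * C.qcore q) p :=
    smOn_diffAt S.openA ((smOn_sq S.smF).mul (smOn_qcore C)) hp
  have hd2 : DifferentiableAt ℝ (fun q => S.vd2 C.phi q * ((S.F q)^2 * C.qcore q)) p :=
    (smOn_diffAt S.openA (smOn_vd2 C.smphi) hp).mul hd1
  have hd3 : DifferentiableAt ℝ (fun q => C.rho q * (S.vd2 C.phi q
      * ((S.F q)^2 * C.qcore q))) p :=
    (smOn_diffAt S.openA (smOn_rho C hRiem) hp).mul hd2
  have hd4 : DifferentiableAt ℝ (fun q => (S.F q)^2 * S.hd1 C.phi q) p :=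
    smOn_diffAt S.openA ((smOn_sq S.smF).mul (smOn_hd1 C.smphi)) hp
  rw [vd1_congrOn S.openA hrep hp,
    vd1_add (by exact (differentiableAt_const (-(1/2):ℝ)).mul hd3)
      (by exact (differentiableAt_const ((1/2):ℝ)).mul hd4),
    vd1_const_mul _ hd3, vd1_const_mul _ hd4,
    vd1_mul (smOn_diffAt S.openA (smOn_rho C hRiem) hp) hd2,
    vd1_mul (smOn_diffAt S.openA (smOn_vd2 C.smphi) hp) hd1,
    vd1_mul (smOn_diffAt S.openA (smOn_sq S.smF) hp)
      (smOn_diffAt S.openA (smOn_qcore C) hp),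
    vd1_mul (smOn_diffAt S.openA (smOn_sq S.smF) hp)
      (smOn_diffAt S.openA (smOn_hd1 C.smphi) hp),
    vd1_rho C hp hRiem, vd1_qcore C hp, vd1_vd2phi C hp, vd1_hd1phi C hp]
  have hF2 : vd1 (fun q => (S.F q)^2) p = 2 * (S.F p)^2 := vd1F2 hp
  rw [hF2]
  unfold AnisoChange.P
  ring

end S4C


namespace S4W

open S4Tool S4Frame S4Riem S4V S4M S4C

variable {S : PFSurf} (C : AnisoChange S) {p : Pt} {i j k : Fin 2}

/-- the deformation part of the spray: `W^i = Q m^i + P ℓ^i` -/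
def Wf (C : AnisoChange S) (i : Fin 2) : Pt → ℝ :=
  fun p => C.Q p * S.mup i p + C.P p * S.ellUp i p

theorem smOn_Wf (hRiem : ∀ q ∈ S.A, S.Iscal q = 0) : SmOn S.A (Wf C i) :=
  ((smOn_Q C hRiem).mul (S.smmu i)).add ((smOn_P C hRiem).mul (smOn_ellUp (S := S)))

theorem vd1_Wf (hRiem : ∀ q ∈ S.A, S.Iscal q = 0) (hp : p ∈ S.A) :
    vd1 (Wf C i) p = 2 * Wf C i p := by
  unfold Wf
  rw [vd1_add ((smOn_diffAt S.openA (smOn_Q C hRiem) hp).fun_mul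
      (smOn_diffAt S.openA (S.smmu i) hp))
    ((smOn_diffAt S.openA (smOn_P C hRiem) hp).fun_mul
      (smOn_diffAt S.openA (smOn_ellUp (S := S)) hp)),
    vd1_mul (smOn_diffAt S.openA (smOn_Q C hRiem) hp)
      (smOn_diffAt S.openA (S.smmu i) hp),
    vd1_mul (smOn_diffAt S.openA (smOn_P C hRiem) hp)
      (smOn_diffAt S.openA (smOn_ellUp (S := S)) hp),
    vd1_Q C hp hRiem, vd1_P C hp hRiem, vd1_mup hp, vd1_ellUp hp]
  ring

/-- `vd2(A·m^i + B·ℓ^i) = (vd2 A + εB)m^i + (vd2 B − A)ℓ^i` -/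
theorem vd2AB (hRiem : ∀ q ∈ S.A, S.Iscal q = 0) {Af Bf : Pt → ℝ}
    (hA : SmOn S.A Af) (hB : SmOn S.A Bf) (hp : p ∈ S.A) (i : Fin 2) :
    S.vd2 (fun q => Af q * S.mup i q + Bf q * S.ellUp i q) p
      = (S.vd2 Af p + S.eps * Bf p) * S.mup i p
        + (S.vd2 Bf p - Af p) * S.ellUp i p := by
  have hF := S.Fne p hp
  rw [vd2_add ((smOn_diffAt S.openA hA hp).fun_mul (smOn_diffAt S.openA (S.smmu i) hp))
      ((smOn_diffAt S.openA hB hp).fun_mul (smOn_diffAt S.openA (smOn_ellUp (S := S)) hp)),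
    vd2_mul (smOn_diffAt S.openA hA hp) (smOn_diffAt S.openA (S.smmu i) hp),
    vd2_mul (smOn_diffAt S.openA hB hp) (smOn_diffAt S.openA (smOn_ellUp (S := S)) hp),
    vd2_mup hRiem hp, vd2_ellUp hp]
  unfold PFSurf.ellUp
  field_simp
  ring

/-- level-one coefficients -/
def A1f (C : AnisoChange S) : Pt → ℝ := fun q => S.vd2 C.Q q + S.eps * C.P q
def B1f (C : AnisoChange S) : Pt → ℝ := fun q => S.vd2 C.P q - C.Q q
def A2f (C : AnisoChange S) : Pt → ℝ := fun q => S.vd2 (A1f C) q + S.eps * B1f C q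
def B2f (C : AnisoChange S) : Pt → ℝ := fun q => S.vd2 (B1f C) q - A1f C q

theorem smOn_A1 (hRiem : ∀ q ∈ S.A, S.Iscal q = 0) : SmOn S.A (A1f C) :=
  (smOn_vd2 (smOn_Q C hRiem)).add ((smOn_const S.eps).mul (smOn_P C hRiem))

theorem smOn_B1 (hRiem : ∀ q ∈ S.A, S.Iscal q = 0) : SmOn S.A (B1f C) :=
  (smOn_vd2 (smOn_P C hRiem)).sub (smOn_Q C hRiem)

theorem smOn_A2 (hRiem : ∀ q ∈ S.A, S.Iscal q = 0) : SmOn S.A (A2f C) :=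
  (smOn_vd2 (smOn_A1 C hRiem)).add ((smOn_const S.eps).mul (smOn_B1 C hRiem))

theorem smOn_B2 (hRiem : ∀ q ∈ S.A, S.Iscal q = 0) : SmOn S.A (B2f C) :=
  (smOn_vd2 (smOn_B1 C hRiem)).sub (smOn_A1 C hRiem)

theorem w1 (hRiem : ∀ q ∈ S.A, S.Iscal q = 0) (hp : p ∈ S.A) (i : Fin 2) :
    S.vd2 (Wf C i) p = A1f C p * S.mup i p + B1f C p * S.ellUp i p :=
  vd2AB hRiem (smOn_Q C hRiem) (smOn_P C hRiem) hp i

theorem w2 (hRiem : ∀ q ∈ S.A, S.Iscal q = 0) (hp : p ∈ S.A) (i : Fin 2) :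
    S.vd2 (S.vd2 (Wf C i)) p = A2f C p * S.mup i p + B2f C p * S.ellUp i p := by
  rw [vd2_congrOn (g := fun q => A1f C q * S.mup i q + B1f C q * S.ellUp i q)
    (fun q hq => w1 C hRiem hq i) hp]
  exact vd2AB hRiem (smOn_A1 C hRiem) (smOn_B1 C hRiem) hp i

theorem w3 (hRiem : ∀ q ∈ S.A, S.Iscal q = 0) (hp : p ∈ S.A) (i : Fin 2) :
    S.vd2 (S.vd2 (S.vd2 (Wf C i))) p
      = (S.vd2 (A2f C) p + S.eps * B2f C p) * S.mup i p
        + (S.vd2 (B2f C) p - A2f C p) * S.ellUp i p := by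
  rw [vd2_congrOn (g := fun q => A2f C q * S.mup i q + B2f C q * S.ellUp i q)
    (fun q hq => w2 C hRiem hq i) hp]
  exact vd2AB hRiem (smOn_A2 C hRiem) (smOn_B2 C hRiem) hp i

/-- the key condition for the master lemma, from `P + εP_{;2;2} = 0`, `Q + εQ_{;2;2} = 0` -/
theorem Wcond (hRiem : ∀ q ∈ S.A, S.Iscal q = 0)
    (hP : ∀ q ∈ S.A, C.P q + S.eps * S.vd2 (S.vd2 C.P) q = 0)
    (hQ : ∀ q ∈ S.A, C.Q q + S.eps * S.vd2 (S.vd2 C.Q) q = 0)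
    (hp : p ∈ S.A) (i : Fin 2) :
    4 * S.eps * S.vd2 (Wf C i) p + S.vd2 (S.vd2 (S.vd2 (Wf C i))) p = 0 := by
  have heps := epssq (S := S)
  -- values of iterated vertical derivatives
  have hvA1 : ∀ q ∈ S.A, S.vd2 (A1f C) q
      = S.vd2 (S.vd2 C.Q) q + S.eps * S.vd2 C.P q := by
    intro q hq
    unfold A1f
    rw [vd2_add (smOn_diffAt S.openA (smOn_vd2 (smOn_Q C hRiem)) hq)
        (smOn_diffAt S.openA ((smOn_const S.eps).mul (smOn_P C hRiem)) hq),
      vd2_const_mul S.eps (smOn_diffAt S.openA (smOn_P C hRiem) hq)]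
  have hvB1 : ∀ q ∈ S.A, S.vd2 (B1f C) q
      = S.vd2 (S.vd2 C.P) q - S.vd2 C.Q q := by
    intro q hq
    unfold B1f
    rw [vd2_sub (smOn_diffAt S.openA (smOn_vd2 (smOn_P C hRiem)) hq)
        (smOn_diffAt S.openA (smOn_Q C hRiem) hq)]
  have hvvA1 : S.vd2 (S.vd2 (A1f C)) p
      = S.vd2 (S.vd2 (S.vd2 C.Q)) p + S.eps * S.vd2 (S.vd2 C.P) p := by
    rw [vd2_congrOn (g := fun q => S.vd2 (S.vd2 C.Q) q + S.eps * S.vd2 C.P q) hvA1 hp,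
      vd2_add (smOn_diffAt S.openA (smOn_vd2 (smOn_vd2 (smOn_Q C hRiem))) hp)
        (smOn_diffAt S.openA ((smOn_const S.eps).mul (smOn_vd2 (smOn_P C hRiem))) hp),
      vd2_const_mul S.eps (smOn_diffAt S.openA (smOn_vd2 (smOn_P C hRiem)) hp)]
  have hvvB1 : S.vd2 (S.vd2 (B1f C)) p
      = S.vd2 (S.vd2 (S.vd2 C.P)) p - S.vd2 (S.vd2 C.Q) p := by
    rw [vd2_congrOn (g := fun q => S.vd2 (S.vd2 C.P) q - S.vd2 C.Q q) hvB1 hp,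
      vd2_sub (smOn_diffAt S.openA (smOn_vd2 (smOn_vd2 (smOn_P C hRiem))) hp)
        (smOn_diffAt S.openA (smOn_vd2 (smOn_Q C hRiem)) hp)]
  have hvA2 : S.vd2 (A2f C) p
      = S.vd2 (S.vd2 (A1f C)) p + S.eps * S.vd2 (B1f C) p := by
    unfold A2f
    rw [vd2_add (smOn_diffAt S.openA (smOn_vd2 (smOn_A1 C hRiem)) hp)
        (smOn_diffAt S.openA ((smOn_const S.eps).mul (smOn_B1 C hRiem)) hp),
      vd2_const_mul S.eps (smOn_diffAt S.openA (smOn_B1 C hRiem) hp)]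
  have hvB2 : S.vd2 (B2f C) p
      = S.vd2 (S.vd2 (B1f C)) p - S.vd2 (A1f C) p := by
    unfold B2f
    rw [vd2_sub (smOn_diffAt S.openA (smOn_vd2 (smOn_B1 C hRiem)) hp)
        (smOn_diffAt S.openA (smOn_A1 C hRiem) hp)]
  -- derived conditions
  have hP2 : S.vd2 C.P p + S.eps * S.vd2 (S.vd2 (S.vd2 C.P)) p = 0 := by
    have hz : S.vd2 (fun q => C.P q + S.eps * S.vd2 (S.vd2 C.P) q) p = 0 :=
      vd2_zero_on hP hp
    rw [vd2_add (smOn_diffAt S.openA (smOn_P C hRiem) hp)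
        (smOn_diffAt S.openA ((smOn_const S.eps).mul
          (smOn_vd2 (smOn_vd2 (smOn_P C hRiem)))) hp),
      vd2_const_mul S.eps (smOn_diffAt S.openA
        (smOn_vd2 (smOn_vd2 (smOn_P C hRiem))) hp)] at hz
    exact hz
  have hQ2 : S.vd2 C.Q p + S.eps * S.vd2 (S.vd2 (S.vd2 C.Q)) p = 0 := by
    have hz : S.vd2 (fun q => C.Q q + S.eps * S.vd2 (S.vd2 C.Q) q) p = 0 :=
      vd2_zero_on hQ hp
    rw [vd2_add (smOn_diffAt S.openA (smOn_Q C hRiem) hp)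
        (smOn_diffAt S.openA ((smOn_const S.eps).mul
          (smOn_vd2 (smOn_vd2 (smOn_Q C hRiem)))) hp),
      vd2_const_mul S.eps (smOn_diffAt S.openA
        (smOn_vd2 (smOn_vd2 (smOn_Q C hRiem))) hp)] at hz
    exact hz
  have hPp := hP p hp
  have hQp := hQ p hp
  rw [w1 C hRiem hp i, w3 C hRiem hp i, hvA2, hvB2, hvvA1, hvvB1,
    show A2f C p = S.vd2 (A1f C) p + S.eps * B1f C p from rfl,
    show B2f C p = S.vd2 (B1f C) p - A1f C p from rfl,
    hvA1 p hp, hvB1 p hp,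
    show A1f C p = S.vd2 C.Q p + S.eps * C.P p from rfl,
    show B1f C p = S.vd2 C.P p - C.Q p from rfl]
  linear_combination (S.eps * S.mup i p) * hQ2 + (3 * S.eps^2 * S.mup i p) * hPp
    + (S.eps * S.ellUp i p) * hP2 + (-(3 * S.eps * S.ellUp i p)) * hQp
    + ((-(S.vd2 (S.vd2 (S.vd2 C.Q)) p + 3 * S.eps * S.vd2 (S.vd2 C.P) p)) * S.mup i p
        + (-(S.vd2 (S.vd2 (S.vd2 C.P)) p) + 3 * S.vd2 (S.vd2 C.Q) p)
          * S.ellUp i p) * heps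

end S4W

/-- If `F` is Riemannian (`I = 0`) and
`P + εP_{;2;2} = 0`, `Q + εQ_{;2;2} = 0`, then `F̄` is Berwaldian. -/
theorem statement4 (S : PFSurf) (C : AnisoChange S)
    (hRiem : ∀ p ∈ S.A, S.Iscal p = 0)
    (hP : ∀ p ∈ S.A, C.P p + S.eps * S.vd2 (S.vd2 C.P) p = 0)
    (hQ : ∀ p ∈ S.A, C.Q p + S.eps * S.vd2 (S.vd2 C.Q) p = 0) :
    BerwaldFlat S.A C.Gbar := by
  intro p hp i j k r
  have hsplit : ∀ q : Pt, C.Gbar i q = S.Gs i q + S4W.Wf C i q := by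
    intro q; unfold AnisoChange.Gbar S4W.Wf; ring
  have hsmW : S4Tool.SmOn S.A (S4W.Wf C i) := S4W.smOn_Wf C hRiem
  have hd1 : ∀ q ∈ S.A, pdy (C.Gbar i) j q
      = pdy (S.Gs i) j q + pdy (S4W.Wf C i) j q := by
    intro q hq
    rw [S4Tool.pdy_congrOn (g := fun q' => S.Gs i q' + S4W.Wf C i q') S.openA
      (fun q' _ => hsplit q') hq]
    exact S4Tool.pdy_add (S4Tool.smOn_diffAt S.openA (S.smG i) hq)
      (S4Tool.smOn_diffAt S.openA hsmW hq)
  have hd2 : ∀ q ∈ S.A, pdy (pdy (C.Gbar i) j) k q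
      = pdy (pdy (S.Gs i) j) k q + pdy (pdy (S4W.Wf C i) j) k q := by
    intro q hq
    rw [S4Tool.pdy_congrOn S.openA hd1 hq]
    exact S4Tool.pdy_add
      (S4Tool.smOn_diffAt S.openA (S4Tool.smOn_pdy S.openA (S.smG i) j) hq)
      (S4Tool.smOn_diffAt S.openA (S4Tool.smOn_pdy S.openA hsmW j) hq)
  have hd3 : pdy (pdy (pdy (C.Gbar i) j) k) r p
      = pdy (pdy (pdy (S.Gs i) j) k) r p + pdy (pdy (pdy (S4W.Wf C i) j) k) r p := by
    rw [S4Tool.pdy_congrOn S.openA hd2 hp]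
    exact S4Tool.pdy_add
      (S4Tool.smOn_diffAt S.openA
        (S4Tool.smOn_pdy S.openA (S4Tool.smOn_pdy S.openA (S.smG i) j) k) hp)
      (S4Tool.smOn_diffAt S.openA
        (S4Tool.smOn_pdy S.openA (S4Tool.smOn_pdy S.openA hsmW j) k) hp)
  have hG := S4G.d3G hRiem hp i j k r
  have hW3 : pdy (pdy (pdy (S4W.Wf C i) j) k) r p = 0 :=
    S4M.master hRiem hsmW (fun q hq => S4W.vd1_Wf C hRiem hq)
      (fun q hq => S4W.Wcond C hRiem hP hQ hq i) hp j k r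
  rw [hd3, hG, hW3]
  ring
end
end
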